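/- Let N be a leaf-labeled network and T a root component of N. Then the μ-vector μ(ρ(T), N⁺_ρ) is the same for every root choice function ρ. Moreover, if uv is an edge of T, this common vector (the root μ-vector μ_r(T)) equals μ_d(u, v) + μ_d(v, u), the sum of the two directional μ-vectors of the edge uv. -/

import Mathlib

open Relation

/-- A semidirected graph: a set of undirected edges and a set of directed edges. -/
structure SDG (V : Type) where
  undir : Finset (Sym2 V)
  dir : Finset (V × V)

namespace SDG

variable {V : Type} [DecidableEq V]

/-- one step along a directed edge -/
def dstep (N : SDG V) (u v : V) : Prop := (u, v) ∈ N.dir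

/-- one step along an undirected edge -/
def ustep (N : SDG V) (u v : V) : Prop := s(u, v) ∈ N.undir

/-- one step of a semidirected path -/
def sstep (N : SDG V) (u v : V) : Prop := N.dstep u v ∨ N.ustep u v

/-- directed reachability (existence of a directed path) -/
def dreach (N : SDG V) : V → V → Prop := ReflTransGen N.dstep

/-- reachability using undirected edges only -/
def ureach (N : SDG V) : V → V → Prop := ReflTransGen N.ustep

/-- semidirected reachability (existence of a semidirected path) -/
def sreach (N : SDG V) : V → V → Prop := ReflTransGen N.sstep

/-- `M` is obtained from `N` by directing some of the undirected edges of `N`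
(each such edge receiving exactly one direction). -/
def Directs (N M : SDG V) : Prop :=
  M.undir ⊆ N.undir ∧ N.dir ⊆ M.dir ∧
    (∀ e ∈ M.dir, e ∉ N.dir → s(e.1, e.2) ∈ N.undir ∧ s(e.1, e.2) ∉ M.undir) ∧
    (∀ p ∈ N.undir, p ∉ M.undir →
      ∃! e : V × V, e ∈ M.dir ∧ e ∉ N.dir ∧ s(e.1, e.2) = p)

/-- a semidirected graph is directed when it has no undirected edges -/
def IsDirected (N : SDG V) : Prop := N.undir = ∅

/-- existence of a directed cycle -/
def HasDirCycle (N : SDG V) : Prop := ∃ e ∈ N.dir, N.dreach e.2 e.1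

/-- `N` is acyclic if no compatible directed graph (obtained by directing all
undirected edges) has a directed cycle. -/
def Acyclic (N : SDG V) : Prop :=
  ∀ G : SDG V, Directs N G → G.IsDirected → ¬ G.HasDirCycle

/-- in-degree: number of incoming directed edges -/
def ideg (N : SDG V) (v : V) : ℕ := (N.dir.filter fun e => e.2 = v).card

/-- out-degree: number of outgoing directed edges -/
def odeg (N : SDG V) (v : V) : ℕ := (N.dir.filter fun e => e.1 = v).card

/-- number of incident undirected edges -/
def udeg (N : SDG V) (v : V) : ℕ := (N.undir.filter fun p => v ∈ p).card

/-- total degree -/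
def deg (N : SDG V) (v : V) : ℕ := N.ideg v + N.odeg v + N.udeg v

/-- hybrid edges: directed edges whose child is a hybrid node (in-degree ≥ 2) -/
def hybridEdges (N : SDG V) : Finset (V × V) := N.dir.filter fun e => 2 ≤ N.ideg e.2

/-- no self-loops, and no undirected edge parallel to a directed edge -/
def Proper (N : SDG V) : Prop :=
  (∀ p ∈ N.undir, ¬ p.IsDiag) ∧ (∀ e ∈ N.dir, e.1 ≠ e.2) ∧
    ∀ e ∈ N.dir, s(e.1, e.2) ∉ N.undir

/-- `M` is phylogenetically compatible with `N`: `M` is an SDAG obtained from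
`N` by directing some undirected edges, keeping the same hybrid edges. -/
def PhyloCompat (M N : SDG V) : Prop :=
  Directs N M ∧ M.Acyclic ∧ M.hybridEdges = N.hybridEdges

/-- a rooted partner of `N`: a DAG phylogenetically compatible with `N` -/
def RootedPartner (G N : SDG V) : Prop := PhyloCompat G N ∧ G.IsDirected

/-- a network: an SDAG admitting a rooted partner -/
def IsNetwork (N : SDG V) : Prop := N.Acyclic ∧ ∃ G : SDG V, RootedPartner G N

/-- mutual semidirected reachability (same undirected component) -/
def sim (N : SDG V) (u v : V) : Prop := N.sreach u v ∧ N.sreach v u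

/-- `v` lies in a root component: its undirected component is maximal for the
semidirected-path preorder -/
def InRootComp (N : SDG V) (v : V) : Prop := ∀ u, N.sreach u v → N.sreach v u

/-- the undirected simple graph induced by the undirected edges -/
def undirGraph (N : SDG V) : SimpleGraph V :=
  SimpleGraph.fromEdgeSet (N.undir : Set (Sym2 V))

/-- leaf in some rooted partner -/
def IsUnrootedLeaf (N : SDG V) (v : V) : Prop :=
  ∃ G : SDG V, RootedPartner G N ∧ G.odeg v = 0

/-- leaf in every rooted partner -/
def IsRootedLeaf (N : SDG V) (v : V) : Prop :=
  ∀ G : SDG V, RootedPartner G N → G.odeg v = 0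

/-- a leaf-labeled network: a network whose unrooted leaves are all rooted leaves
(so that its leaf set is stable across rooted partners and can be labeled) -/
def LNetwork (N : SDG V) : Prop :=
  IsNetwork N ∧ ∀ v, IsUnrootedLeaf N v → IsRootedLeaf N v

/-- `l` is (the list of nodes of) a directed path from `u` to `v` in `G` -/
def IsDPathList (G : SDG V) (u v : V) (l : List V) : Prop :=
  l.head? = some u ∧ l.getLast? = some v ∧ l.Chain' G.dstep

/-- the number of directed paths from `u` to `v` -/
noncomputable def pathCount (G : SDG V) (u v : V) : ℕ :=
  Set.ncard {l : List V | IsDPathList G u v l}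

/-- the set of directed paths starting at `v` -/
def startPaths (G : SDG V) (v : V) : Set (List V) :=
  {l : List V | l.head? = some v ∧ l.Chain' G.dstep}

/-- a root choice function: picks one node in each root component, constant on
root components, and the identity outside of root components -/
def RootChoice (N : SDG V) (ρ : V → V) : Prop :=
  (∀ v, InRootComp N v → sim N v (ρ v) ∧ ∀ u, InRootComp N u → sim N u v → ρ u = ρ v) ∧
    ∀ v, ¬ InRootComp N v → ρ v = v

/-- `G` is the rooted partner of `N` whose set of roots (in-degree 0 nodes) is the
image of the root choice function `ρ` -/
def PartnerFor (N : SDG V) (ρ : V → V) (G : SDG V) : Prop :=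
  RootedPartner G N ∧ {v | G.ideg v = 0} = ρ '' {v | InRootComp N v}

-- the directional μ-vector of `(u, v)`: path counts from `v` to each node in any
-- rooted partner directing the edge `uv` as `(u, v)`
open Classical in
noncomputable def muD (N : SDG V) (u v : V) : V → ℕ :=
  if h : ∃ G : SDG V, RootedPartner G N ∧ (u, v) ∈ G.dir then
    fun x => pathCount h.choose v x
  else fun _ => 0

-- the root μ-vector of the root component of `t`
open Classical in
noncomputable def muR (N : SDG V) (t : V) : V → ℕ :=
  if h : ∃ p : (V → V) × SDG V, RootChoice N p.1 ∧ PartnerFor N p.1 p.2 then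
    fun x => pathCount h.choose.2 (h.choose.1 t) x
  else fun _ => 0

/-- a DAG is tree-child if every non-leaf node has a tree-node child -/
def TreeChildDAG (G : SDG V) : Prop :=
  ∀ v, 0 < G.odeg v → ∃ w, (v, w) ∈ G.dir ∧ G.ideg w ≤ 1

/-- all rooted partners are tree-child -/
def StronglyTreeChild (N : SDG V) : Prop :=
  ∀ G : SDG V, RootedPartner G N → TreeChildDAG G

/-- some rooted partner is tree-child -/
def WeaklyTreeChild (N : SDG V) : Prop :=
  ∃ G : SDG V, RootedPartner G N ∧ TreeChildDAG G

/-- coordinatewise comparison of μ-vectors over the leaves of `N` -/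
def muLE (N : SDG V) (m m' : V → ℕ) : Prop :=
  ∀ x, IsUnrootedLeaf N x → m x ≤ m' x

/-- incomparability of μ-vectors (over the leaves of `N`) -/
def muIncomp (N : SDG V) (m m' : V → ℕ) : Prop :=
  ¬ muLE N m m' ∧ ¬ muLE N m' m

/-- a network is complete when every undirected edge lies in a root component
(equivalently, it equals its completion) -/
def Complete (N : SDG V) : Prop := ∀ p ∈ N.undir, ∀ v ∈ p, InRootComp N v

/-- reachability by a tree path (directed path whose edges are all tree edges) -/
def treeReach (G : SDG V) : V → V → Prop :=
  ReflTransGen fun a b => (a, b) ∈ G.dir ∧ G.ideg b ≤ 1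

/-- `v` has a tree descendant leaf -/
def HasTreeDescLeaf (G : SDG V) (v : V) : Prop := ∃ x, G.odeg x = 0 ∧ treeReach G v x

/-- `l` is an elementary path from `u` to `v`: a directed path whose first node
has out-degree 1 and whose intermediate nodes have in- and out-degree 1 -/
def IsElemPathList (G : SDG V) (u v : V) (l : List V) : Prop :=
  l.head? = some u ∧ l.getLast? = some v ∧ l.Chain' G.dstep ∧ 2 ≤ l.length ∧
    G.odeg u = 1 ∧ ∀ w ∈ (l.drop 1).dropLast, G.ideg w = 1 ∧ G.odeg w = 1

/-- an elementary node: a tree node with out-degree = total degree = 1, or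
out-degree < total degree = 2 -/
def IsElemNode (G : SDG V) (v : V) : Prop :=
  G.ideg v ≤ 1 ∧ ((G.odeg v = 1 ∧ G.deg v = 1) ∨ (G.odeg v < G.deg v ∧ G.deg v = 2))

/-- the setoid identifying nodes connected by undirected edges -/
def usetoid (N : SDG V) : Setoid V :=
  ⟨Relation.EqvGen N.ustep, Relation.EqvGen.is_equivalence _⟩

/-- the edge relation of the contraction of `N`: the directed graph on the
quotient by undirected connectivity, with the directed edges of `N` -/
def crel (N : SDG V) (x y : Quotient N.usetoid) : Prop :=
  ∃ u v : V, (u, v) ∈ N.dir ∧ Quotient.mk N.usetoid u = x ∧ Quotient.mk N.usetoid v = y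

set_option linter.unusedSectionVars false
set_option linter.unusedVariables false

/-! ### Auxiliary list and relation lemmas -/

section ListAux

variable {α : Type*} {R : α → α → Prop}

lemma rtg_of_chain' :
    ∀ l : List α, l.Chain' R → ∀ a b, l.head? = some a → l.getLast? = some b →
      Relation.ReflTransGen R a b := by
  intro l
  induction l with
  | nil => intro _ a b h; simp at h
  | cons c l ih =>
    intro hc a b ha hb
    simp only [List.head?_cons, Option.some.injEq] at ha
    subst ha
    cases l with
    | nil =>
      simp only [List.getLast?_singleton, Option.some.injEq] at hb
      subst hb; exact Relation.ReflTransGen.refl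
    | cons d l' =>
      rw [List.Chain', List.isChain_cons_cons] at hc
      have hb' : (d :: l').getLast? = some b := by
        rw [List.getLast?_cons_cons] at hb; exact hb
      exact Relation.ReflTransGen.head hc.1 (ih hc.2 d b rfl hb')

lemma chain'_of_rtg {a b : α} (h : Relation.ReflTransGen R a b) :
    ∃ l : List α, l.head? = some a ∧ l.getLast? = some b ∧ l.Chain' R := by
  induction h using Relation.ReflTransGen.head_induction_on with
  | refl => exact ⟨[b], rfl, rfl, List.isChain_singleton b⟩
  | @head a' c' hac hcb ih =>
    obtain ⟨l, hl1, hl2, hl3⟩ := ih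
    cases l with
    | nil => simp at hl1
    | cons d l' =>
      simp only [List.head?_cons, Option.some.injEq] at hl1
      subst hl1
      refine ⟨a' :: d :: l', rfl, ?_, ?_⟩
      · rw [List.getLast?_cons_cons]; exact hl2
      · rw [List.Chain', List.isChain_cons_cons]; exact ⟨hac, hl3⟩

lemma head_reaches_mem :
    ∀ l : List α, l.Chain' R → ∀ a c, l.head? = some a → c ∈ l →
      Relation.ReflTransGen R a c := by
  intro l
  induction l with
  | nil => intro _ a c h; simp at h
  | cons d l ih =>
    intro hc a c ha hm
    simp only [List.head?_cons, Option.some.injEq] at ha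
    subst ha
    rcases List.mem_cons.1 hm with h | h
    · subst h; exact Relation.ReflTransGen.refl
    · cases l with
      | nil => simp at h
      | cons e l' =>
        rw [List.Chain', List.isChain_cons_cons] at hc
        exact Relation.ReflTransGen.head hc.1 (ih hc.2 e c rfl h)

lemma mem_reaches_last :
    ∀ l : List α, l.Chain' R → ∀ b c, l.getLast? = some b → c ∈ l →
      Relation.ReflTransGen R c b := by
  intro l
  induction l with
  | nil => intro _ b c h; simp at h
  | cons d l ih =>
    intro hc b c hb hm
    cases l with
    | nil =>
      simp only [List.getLast?_singleton, Option.some.injEq] at hb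
      subst hb
      simp only [List.mem_singleton] at hm
      subst hm; exact Relation.ReflTransGen.refl
    | cons e l' =>
      rw [List.getLast?_cons_cons] at hb
      rw [List.Chain', List.isChain_cons_cons] at hc
      rcases List.mem_cons.1 hm with h | h
      · subst h
        exact Relation.ReflTransGen.head hc.1 (ih hc.2 b e hb (List.mem_cons_self))
      · exact ih hc.2 b c hb h

/-- every member of a chain other than the head has an `R`-predecessor in the list -/
lemma mem_pred_of_chain' :
    ∀ l : List α, l.Chain' R → ∀ a c, l.head? = some a → c ∈ l →
      c = a ∨ ∃ d ∈ l, R d c := by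
  intro l
  induction l with
  | nil => intro _ a c h; simp at h
  | cons d l ih =>
    intro hc a c ha hm
    simp only [List.head?_cons, Option.some.injEq] at ha
    subst ha
    rcases List.mem_cons.1 hm with h | h
    · exact Or.inl h
    · cases l with
      | nil => simp at h
      | cons e l' =>
        rw [List.Chain', List.isChain_cons_cons] at hc
        rcases ih hc.2 e c rfl h with h' | ⟨d', hd1, hd2⟩
        · subst h'
          exact Or.inr ⟨d, List.mem_cons_self, hc.1⟩
        · exact Or.inr ⟨d', List.mem_cons_of_mem _ hd1, hd2⟩

/-- a chain can be replaced by a duplicate-free chain with the same endpoints -/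
lemma nodup_chain'_aux :
    ∀ (n : ℕ) (l : List α), l.length ≤ n → l.Chain' R → l ≠ [] →
      ∃ l' : List α, l'.Chain' R ∧ l'.head? = l.head? ∧ l'.getLast? = l.getLast? ∧
        l'.Nodup ∧ ∀ x ∈ l', x ∈ l := by
  intro n
  induction n with
  | zero =>
    intro l hl _ hne
    cases l with
    | nil => exact absurd rfl hne
    | cons c rest => simp at hl
  | succ n ih =>
    intro l hl hc hne
    cases l with
    | nil => exact absurd rfl hne
    | cons c rest =>
      by_cases hcr : c ∈ rest
      · obtain ⟨l₁, l₂, rfl⟩ := List.append_of_mem hcr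
        have hsuf : (c :: l₂) <:+ (c :: (l₁ ++ c :: l₂)) :=
          ⟨c :: l₁, by simp⟩
        have hchain : (c :: l₂).Chain' R := hc.suffix hsuf
        have hlen : (c :: l₂).length ≤ n := by
          simp only [List.length_cons, List.length_append] at hl ⊢; omega
        obtain ⟨l', h1, h2, h3, h4, h5⟩ := ih _ hlen hchain (by simp)
        refine ⟨l', h1, by simpa using h2, ?_, h4, ?_⟩
        · rw [h3]
          show (c :: l₂).getLast? = (c :: (l₁ ++ c :: l₂)).getLast?
          rw [show (c :: (l₁ ++ c :: l₂)) = (c :: l₁) ++ (c :: l₂) by simp,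
            List.getLast?_append_cons]
        · intro x hx
          exact hsuf.subset (h5 x hx)
      · cases rest with
        | nil =>
          exact ⟨[c], List.isChain_singleton c, rfl, rfl, List.nodup_singleton c, fun x hx => hx⟩
        | cons e rest' =>
          have hchain : (e :: rest').Chain' R := hc.tail
          have hlen : (e :: rest').length ≤ n := by
            simp only [List.length_cons] at hl ⊢; omega
          obtain ⟨l', h1, h2, h3, h4, h5⟩ := ih _ hlen hchain (by simp)
          cases l' with
          | nil => simp at h2
          | cons f l'' =>
            simp only [List.head?_cons, Option.some.injEq] at h2
            subst h2
            refine ⟨c :: f :: l'', ?_, rfl, ?_, ?_, ?_⟩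
            · rw [List.Chain', List.isChain_cons_cons]
              exact ⟨(List.isChain_cons_cons.1 hc).1, h1⟩
            · rw [List.getLast?_cons_cons]
              rw [h3, List.getLast?_cons_cons]
            · rw [List.nodup_cons]
              exact ⟨fun hmem => hcr (h5 _ hmem), h4⟩
            · intro x hx
              rcases List.mem_cons.1 hx with h | h
              · exact h ▸ List.mem_cons_self
              · exact List.mem_cons_of_mem _ (h5 x h)

lemma nodup_chain' (l : List α) (hc : l.Chain' R) (hne : l ≠ []) :
    ∃ l' : List α, l'.Chain' R ∧ l'.head? = l.head? ∧ l'.getLast? = l.getLast? ∧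
      l'.Nodup ∧ ∀ x ∈ l', x ∈ l :=
  nodup_chain'_aux l.length l le_rfl hc hne

end ListAux

/-! ### Basic lemmas about proper networks and rooted partners -/

section Basic

variable {V : Type} [DecidableEq V] {N G : SDG V}

lemma undir_ne (hP : N.Proper) {u v : V} (h : s(u,v) ∈ N.undir) : u ≠ v := by
  intro he
  exact hP.1 _ h (by rw [he]; exact Sym2.mk_isDiag_iff.2 rfl)

lemma undir_not_dir (hP : N.Proper) {u v : V} (h : s(u,v) ∈ N.undir) : (u,v) ∉ N.dir :=
  fun hd => hP.2.2 (u,v) hd h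

lemma directed_directs_self (h : G.IsDirected) : Directs G G :=
  ⟨Finset.Subset.refl _, Finset.Subset.refl _,
    fun e he hne => absurd he hne, fun p hp hnp => absurd hp hnp⟩

lemma partner_noCycle (hG : RootedPartner G N) : ¬ G.HasDirCycle :=
  hG.1.2.1 G (directed_directs_self hG.2) hG.2

lemma partner_dir_subset (hG : RootedPartner G N) : N.dir ⊆ G.dir := hG.1.1.2.1

lemma partner_extra_undir (hG : RootedPartner G N) {e : V × V} (he : e ∈ G.dir)
    (hne : e ∉ N.dir) : s(e.1, e.2) ∈ N.undir :=
  (hG.1.1.2.2.1 e he hne).1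

/-- each undirected edge gets exactly one orientation in a rooted partner -/
lemma orient_iff (hP : N.Proper) (hD : Directs N G) (hdir : G.IsDirected) {u v : V}
    (h : s(u,v) ∈ N.undir) : ((u,v) ∈ G.dir ↔ (v,u) ∉ G.dir) := by
  have hsw : s(v,u) = s(u,v) := Sym2.eq_swap
  have hnil : s(u,v) ∉ G.undir := by rw [hdir]; exact Finset.notMem_empty _
  obtain ⟨e, ⟨he1, he2, he3⟩, huniq⟩ := hD.2.2.2 s(u,v) h hnil
  have hnuv : (u,v) ∉ N.dir := undir_not_dir hP h
  have hnvu : (v,u) ∉ N.dir := undir_not_dir hP (hsw ▸ h)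
  constructor
  · intro huv hvu
    have h1 : (u,v) = e := huniq (u,v) ⟨huv, hnuv, rfl⟩
    have h2 : (v,u) = e := huniq (v,u) ⟨hvu, hnvu, hsw⟩
    have : u = v := congrArg Prod.fst (h1.trans h2.symm)
    exact undir_ne hP h this
  · intro hvu
    rcases Sym2.eq_iff.1 he3 with ⟨h1, h2⟩ | ⟨h1, h2⟩
    · have : e = (u,v) := Prod.ext h1 h2
      exact this ▸ he1
    · have : e = (v,u) := Prod.ext h1 h2
      exact absurd (this ▸ he1) hvu

lemma partner_orient_iff (hP : N.Proper) (hG : RootedPartner G N) {u v : V}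
    (h : s(u,v) ∈ N.undir) : ((u,v) ∈ G.dir ↔ (v,u) ∉ G.dir) :=
  orient_iff hP hG.1.1 hG.2 h

lemma ideg_pos_of_mem {w c : V} (h : (w,c) ∈ G.dir) : 1 ≤ G.ideg c :=
  Finset.card_pos.2 ⟨(w,c), Finset.mem_filter.2 ⟨h, rfl⟩⟩

lemma two_le_ideg {w₁ w₂ c : V} (h1 : (w₁,c) ∈ G.dir) (h2 : (w₂,c) ∈ G.dir)
    (hne : w₁ ≠ w₂) : 2 ≤ G.ideg c :=
  Finset.one_lt_card_iff.2 ⟨(w₁,c), (w₂,c), Finset.mem_filter.2 ⟨h1, rfl⟩,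
    Finset.mem_filter.2 ⟨h2, rfl⟩, by simp [hne]⟩

lemma in_unique_of_ideg_one {w c : V} (h : G.ideg c = 1) (he : (w,c) ∈ G.dir) :
    ∀ w', (w',c) ∈ G.dir → w' = w := by
  intro w' hw'
  by_contra hne
  have := two_le_ideg hw' he hne
  omega

/-- F4: an edge of a partner not in `N` enters a node of in-degree exactly one
(in the partner) and zero (in `N`). -/
lemma extra_edge_ideg (hD : Directs N G) (hhyb : G.hybridEdges = N.hybridEdges)
    {e : V × V} (he : e ∈ G.dir) (hne : e ∉ N.dir) :
    G.ideg e.2 = 1 ∧ N.ideg e.2 = 0 := by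
  have h1 : 1 ≤ G.ideg e.2 := Finset.card_pos.2 ⟨e, Finset.mem_filter.2 ⟨he, rfl⟩⟩
  have h2 : G.ideg e.2 ≤ 1 := by
    by_contra h
    push_neg at h
    have : e ∈ G.hybridEdges := Finset.mem_filter.2 ⟨he, h⟩
    rw [hhyb] at this
    exact hne (Finset.mem_filter.1 this).1
  have hG1 : G.ideg e.2 = 1 := le_antisymm h2 h1
  refine ⟨hG1, ?_⟩
  unfold ideg
  rw [Finset.card_eq_zero, Finset.eq_empty_iff_forall_notMem]
  intro f hf
  have hf1 := Finset.mem_filter.1 hf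
  have hfG : f ∈ G.dir := hD.2.1 hf1.1
  have hin1 : (f.1, e.2) ∈ G.dir := by rw [← hf1.2]; simpa using hfG
  have hin2 : (e.1, e.2) ∈ G.dir := by simpa using he
  have hfe1 : f.1 = e.1 := in_unique_of_ideg_one hG1 hin2 f.1 hin1
  have hfe : f = e := Prod.ext hfe1 hf1.2
  exact hne (hfe ▸ hf1.1)

lemma partner_extra_edge_ideg (hG : RootedPartner G N) {e : V × V} (he : e ∈ G.dir)
    (hne : e ∉ N.dir) : G.ideg e.2 = 1 ∧ N.ideg e.2 = 0 :=
  extra_edge_ideg hG.1.1 hG.1.2.2 he hne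

lemma ustep_symm {u v : V} (h : N.ustep u v) : N.ustep v u := by
  unfold ustep at *
  rwa [Sym2.eq_swap]

lemma sim_refl (v : V) : sim N v v := ⟨.refl, .refl⟩

lemma sim_symm {u v : V} (h : sim N u v) : sim N v u := ⟨h.2, h.1⟩

lemma sim_trans {u v w : V} (h1 : sim N u v) (h2 : sim N v w) : sim N u w :=
  ⟨h1.1.trans h2.1, h2.2.trans h1.2⟩

lemma ustep_sim {u v : V} (h : N.ustep u v) : sim N u v :=
  ⟨.single (Or.inr h), .single (Or.inr (ustep_symm h))⟩

lemma ureach_sim {u v : V} (h : N.ureach u v) : sim N u v := by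
  induction h with
  | refl => exact sim_refl _
  | tail _ hstep ih => exact sim_trans ih (ustep_sim hstep)

lemma InRootComp_of_sim {v w : V} (h : InRootComp N v) (hsim : sim N v w) :
    InRootComp N w := by
  intro u hu
  have h1 : N.sreach u v := hu.trans hsim.2
  have h2 : N.sreach v u := h u h1
  exact hsim.2.trans h2

/-- orientation-propagation: a duplicate-free semidirected path starting at a node all of
whose incoming partner-edges are `N`-edges (or whose unique incoming edge is the given
extra edge avoiding the path) is oriented forward in the partner -/
lemma fwd_chain (hP : N.Proper) (hND : N.dir ⊆ G.dir)
    (h1b : ∀ u v : V, s(u,v) ∈ N.undir → ((u,v) ∈ G.dir ↔ (v,u) ∉ G.dir))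
    (hF4 : ∀ e : V × V, e ∈ G.dir → e ∉ N.dir → G.ideg e.2 = 1 ∧ N.ideg e.2 = 0) :
    ∀ (l : List V) (c : V), (c :: l).Chain' N.sstep → (c :: l).Nodup →
      ((∀ w, (w, c) ∈ G.dir → (w, c) ∈ N.dir) ∨
        (∃ p, (p, c) ∈ G.dir ∧ (p, c) ∉ N.dir ∧ ∀ d, l.head? = some d → p ≠ d)) →
      (c :: l).Chain' G.dstep := by
  intro l
  induction l with
  | nil => intro c _ _ _; exact List.isChain_singleton c
  | cons d l' ih =>
    intro c hc hnd hst
    have hstep : (c, d) ∈ G.dir := by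
      rcases (List.isChain_cons_cons.1 hc).1 with hdir | hund
      · exact hND hdir
      · by_cases hgd : (c,d) ∈ G.dir
        · exact hgd
        · have hdc : (d,c) ∈ G.dir := by
            by_contra hdc
            exact hgd ((h1b c d hund).2 hdc)
          have hdcN : (d,c) ∉ N.dir := undir_not_dir hP (ustep_symm hund)
          rcases hst with hS0 | ⟨p, hp1, hp2, hp3⟩
          · exact absurd (hS0 d hdc) hdcN
          · have hpd : p ≠ d := hp3 d rfl
            have h2 := two_le_ideg hp1 hdc hpd
            have h1 := (hF4 (p,c) hp1 hp2).1
            simp only at h1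
            omega
    refine List.isChain_cons_cons.2 ⟨hstep, ?_⟩
    apply ih d (List.isChain_cons_cons.1 hc).2 (List.nodup_cons.1 hnd).2
    by_cases hNd : (c,d) ∈ N.dir
    · left
      intro w hw
      by_contra hwN
      have hz := (hF4 (w,d) hw hwN).2
      have : 1 ≤ N.ideg d := Finset.card_pos.2 ⟨(c,d), Finset.mem_filter.2 ⟨hNd, rfl⟩⟩
      simp only at hz
      omega
    · right
      refine ⟨c, hstep, hNd, ?_⟩
      intro e he hce
      have : e ∈ d :: l' := by
        cases l' with
        | nil => simp at he
        | cons f l'' =>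
          simp only [List.head?_cons, Option.some.injEq] at he
          subst he
          exact List.mem_cons_of_mem _ (List.mem_cons_self)
      exact (List.nodup_cons.1 hnd).1 (hce ▸ this)

lemma partner_fwd_chain (hP : N.Proper) (hG : RootedPartner G N) :
    ∀ (l : List V) (c : V), (c :: l).Chain' N.sstep → (c :: l).Nodup →
      ((∀ w, (w, c) ∈ G.dir → (w, c) ∈ N.dir) ∨
        (∃ p, (p, c) ∈ G.dir ∧ (p, c) ∉ N.dir ∧ ∀ d, l.head? = some d → p ≠ d)) →
      (c :: l).Chain' G.dstep :=
  fwd_chain hP (partner_dir_subset hG) (fun u v h => orient_iff hP hG.1.1 hG.2 h)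
    (fun e he hne => extra_edge_ideg hG.1.1 hG.1.2.2 he hne)

/-- A2: no semidirected path from the head of a directed edge back to its tail -/
lemma no_semi_cycle (hP : N.Proper) (hG : RootedPartner G N) {x a : V}
    (hd : (x, a) ∈ N.dir) (hs : N.sreach a x) : False := by
  obtain ⟨l, hl1, hl2, hl3⟩ := chain'_of_rtg hs
  have hlne : l ≠ [] := by
    cases l with
    | nil => simp at hl1
    | cons h t => simp
  obtain ⟨l', hc', hh', hlast', hnd, _⟩ := nodup_chain' l hl3 hlne
  rw [hl1] at hh'
  rw [hl2] at hlast'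
  cases l' with
  | nil => simp at hh'
  | cons c rest =>
    simp only [List.head?_cons, Option.some.injEq] at hh'
    subst hh'
    have hS0 : ∀ w, (w, c) ∈ G.dir → (w, c) ∈ N.dir := by
      intro w hw
      by_contra hwN
      have hz := (partner_extra_edge_ideg hG hw hwN).2
      have : 1 ≤ N.ideg c := Finset.card_pos.2 ⟨(x,c), Finset.mem_filter.2 ⟨hd, rfl⟩⟩
      simp only at hz
      omega
    have hfwd := partner_fwd_chain hP hG rest c hc' hnd (Or.inl hS0)
    have hdr : G.dreach c x := rtg_of_chain' _ hfwd c x rfl hlast'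
    exact partner_noCycle hG ⟨(x,c), partner_dir_subset hG hd, hdr⟩

/-- A3: mutually semidirected-reachable nodes are connected by undirected edges -/
lemma ureach_of_sim (hP : N.Proper) (hG : RootedPartner G N) {a b : V}
    (hab : N.sreach a b) (hba : N.sreach b a) : N.ureach a b := by
  revert hba
  induction hab using Relation.ReflTransGen.head_induction_on with
  | refl => intro _; exact .refl
  | @head a' c hac hcb ih =>
    intro hba'
    rcases hac with hdir | hund
    · exact absurd (hcb.trans hba') (fun h => no_semi_cycle hP hG hdir h)
    · have hbc : N.sreach b c := hba'.trans (.single (Or.inr hund))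
      exact .head hund (ih hbc)

/-- C1': incoming edges of root-component nodes in a partner -/
lemma rootcomp_in_edge (hP : N.Proper) (hG : RootedPartner G N) {a w : V}
    (ha : InRootComp N a) (he : (w,a) ∈ G.dir) :
    (w,a) ∉ N.dir ∧ s(w,a) ∈ N.undir ∧ sim N w a ∧ G.ideg a = 1 := by
  have h1 : (w,a) ∉ N.dir := by
    intro hN
    exact no_semi_cycle hP hG hN (ha w (.single (Or.inl hN)))
  have h2 : s(w,a) ∈ N.undir := partner_extra_undir hG he h1
  exact ⟨h1, h2, ustep_sim h2, (partner_extra_edge_ideg hG he h1).1⟩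

end Basic

/-! ### Path-counting lemmas -/

section Count

variable {V : Type} [DecidableEq V] {N G : SDG V}

def pathsSet (G : SDG V) (u v : V) : Set (List V) := {l | IsDPathList G u v l}

lemma pathCount_eq (G : SDG V) (u v : V) : pathCount G u v = (pathsSet G u v).ncard := rfl

lemma chain_nodup_of_noCycle (hcyc : ¬ G.HasDirCycle) :
    ∀ l : List V, l.Chain' G.dstep → l.Nodup := by
  intro l
  induction l with
  | nil => simp
  | cons c rest ih =>
    intro hc
    rw [List.nodup_cons]
    refine ⟨?_, ih hc.tail⟩
    intro hmem
    cases rest with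
    | nil => simp at hmem
    | cons d rest' =>
      have h1 : G.dstep c d := (List.isChain_cons_cons.1 hc).1
      have h2 : G.dreach d c := head_reaches_mem _ hc.tail d c rfl hmem
      exact hcyc ⟨(c,d), h1, h2⟩

def dirVerts (G : SDG V) : Finset V := G.dir.image Prod.fst ∪ G.dir.image Prod.snd

lemma path_mem_verts {u v : V} {l : List V} (h : IsDPathList G u v l) :
    ∀ x ∈ l, x = u ∨ x ∈ dirVerts G := by
  intro x hx
  rcases mem_pred_of_chain' l h.2.2 u x h.1 hx with h' | ⟨d, hd1, hd2⟩
  · exact Or.inl h'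
  · exact Or.inr (Finset.mem_union_right _ (Finset.mem_image.2 ⟨(d,x), hd2, rfl⟩))

lemma finite_lists_over (S : Finset V) (n : ℕ) :
    {l : List V | l.length ≤ n ∧ ∀ x ∈ l, x ∈ S}.Finite := by
  classical
  have h1 : {l : List {x // x ∈ S} | l.length ≤ n}.Finite := List.finite_length_le _ n
  apply Set.Finite.subset (h1.image (List.map Subtype.val))
  rintro l ⟨hlen, hmem⟩
  refine ⟨l.pmap (fun x hx => (⟨x, hx⟩ : {x // x ∈ S})) hmem, by simpa using hlen, ?_⟩
  rw [List.map_pmap]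
  simp

lemma pathsSet_finite (hcyc : ¬ G.HasDirCycle) (u v : V) : (pathsSet G u v).Finite := by
  apply (finite_lists_over (insert u (dirVerts G)) (insert u (dirVerts G)).card).subset
  intro l hl
  have hnd : l.Nodup := chain_nodup_of_noCycle hcyc l hl.2.2
  have hmem : ∀ x ∈ l, x ∈ insert u (dirVerts G) := by
    intro x hx
    rcases path_mem_verts hl x hx with h | h
    · exact Finset.mem_insert.2 (Or.inl h)
    · exact Finset.mem_insert.2 (Or.inr h)
  refine ⟨?_, hmem⟩
  have h1 := List.toFinset_card_of_nodup hnd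
  have hsub : l.toFinset ⊆ insert u (dirVerts G) :=
    fun x hx => hmem x (List.mem_toFinset.1 hx)
  calc l.length = l.toFinset.card := h1.symm
  _ ≤ _ := Finset.card_le_card hsub

lemma pathsSet_self (hcyc : ¬ G.HasDirCycle) (a : V) : pathsSet G a a = {[a]} := by
  ext l
  simp only [Set.mem_singleton_iff]
  constructor
  · rintro ⟨h1, h2, h3⟩
    cases l with
    | nil => simp at h1
    | cons c rest =>
      simp only [List.head?_cons, Option.some.injEq] at h1
      subst h1
      cases rest with
      | nil => rfl
      | cons d rest' =>
        rw [List.getLast?_cons_cons] at h2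
        have hmem : c ∈ d :: rest' := List.mem_of_mem_getLast? (by rw [h2]; rfl)
        have h4 : G.dreach d c := head_reaches_mem _ h3.tail d c rfl hmem
        exact absurd h4 (fun h4 => hcyc ⟨(c,d), (List.isChain_cons_cons.1 h3).1, h4⟩)
  · rintro rfl
    exact ⟨rfl, rfl, List.isChain_singleton a⟩

lemma pathCount_self (hcyc : ¬ G.HasDirCycle) (a : V) : pathCount G a a = 1 := by
  rw [pathCount_eq, pathsSet_self hcyc, Set.ncard_singleton]

lemma dreach_of_path {u v : V} {l : List V} (h : IsDPathList G u v l) : G.dreach u v :=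
  rtg_of_chain' l h.2.2 u v h.1 h.2.1

lemma pathCount_eq_zero {u v : V} (h : ¬ G.dreach u v) : pathCount G u v = 0 := by
  rw [pathCount_eq]
  have : pathsSet G u v = ∅ := by
    rw [Set.eq_empty_iff_forall_notMem]
    intro l hl
    exact h (dreach_of_path hl)
  rw [this, Set.ncard_empty]

lemma dreach_of_pathCount_pos {u v : V} (h : pathCount G u v ≠ 0) : G.dreach u v := by
  obtain ⟨l, hl⟩ := Set.nonempty_of_ncard_ne_zero h
  exact dreach_of_path hl

/-- the set of in-neighbours of a node -/
def inN (G : SDG V) (x : V) : Finset V := (G.dir.filter (fun e => e.2 = x)).image Prod.fst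

lemma mem_inN {G : SDG V} {w x : V} : w ∈ inN G x ↔ (w, x) ∈ G.dir := by
  constructor
  · intro h
    obtain ⟨e, he, hfst⟩ := Finset.mem_image.1 h
    have := Finset.mem_filter.1 he
    have heq : e = (w, x) := Prod.ext hfst this.2
    exact heq ▸ this.1
  · intro h
    exact Finset.mem_image.2 ⟨(w,x), Finset.mem_filter.2 ⟨h, rfl⟩, rfl⟩

/-- peeling off the last step of a path: the path count to `x` is the sum of the
path counts to the in-neighbours of `x` -/
lemma pathCount_last_sum (hcyc : ¬ G.HasDirCycle) {u x : V} (hne : u ≠ x) :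
    pathCount G u x = ∑ w ∈ inN G x, pathCount G u w := by
  classical
  have hfin : ∀ w, (pathsSet G u w).Finite := fun w => pathsSet_finite hcyc u w
  set F : V → Finset (List V) := fun w => (hfin w).toFinset.image (fun l => l ++ [x]) with hF
  have happinj : Function.Injective (fun l : List V => l ++ [x]) := by
    intro a b h
    exact List.append_cancel_right h
  -- the main decomposition
  have hset : (hfin x).toFinset = (inN G x).biUnion F := by
    ext l
    simp only [Set.Finite.mem_toFinset, Finset.mem_biUnion, hF, Finset.mem_image,
      Set.Finite.mem_toFinset]
    constructor
    · rintro ⟨h1, h2, h3⟩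
      have hlne : l ≠ [] := by cases l with | nil => simp at h1 | cons c t => simp
      have hxlast : l.getLast hlne = x := by
        have := List.getLast?_eq_getLast hlne
        rw [h2] at this
        exact (Option.some.injEq _ _ ▸ this.symm :)
      have hdecomp : l.dropLast ++ [x] = l := by
        conv_rhs => rw [← List.dropLast_concat_getLast hlne]
        rw [hxlast]
      have hl'ne : l.dropLast ≠ [] := by
        intro hnil
        rw [hnil, List.nil_append] at hdecomp
        rw [← hdecomp] at h1
        simp only [List.head?_cons, Option.some.injEq] at h1
        exact hne h1.symm
      rw [← hdecomp] at h3
      rw [List.Chain', List.isChain_append] at h3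
      obtain ⟨hc1, _, hc3⟩ := h3
      obtain ⟨w, hw⟩ : ∃ w, l.dropLast.getLast? = some w := by
        cases hl : l.dropLast with
        | nil => exact absurd hl hl'ne
        | cons c t => exact ⟨(c :: t).getLast (by simp), List.getLast?_eq_getLast _⟩
      have hwx : (w, x) ∈ G.dir := hc3 w hw x rfl
      refine ⟨w, mem_inN.2 hwx, l.dropLast, ⟨?_, hw, hc1⟩, hdecomp⟩
      · rw [← hdecomp] at h1
        cases hl : l.dropLast with
        | nil => exact absurd hl hl'ne
        | cons c t =>
          simp only [hl] at h1 ⊢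
          simpa using h1
    · rintro ⟨w, hw, m, ⟨h1, h2, h3⟩, rfl⟩
      have hmne : m ≠ [] := by cases m with | nil => simp at h1 | cons c t => simp
      refine ⟨?_, List.getLast?_concat, ?_⟩
      · cases m with
        | nil => simp at h1
        | cons c t => simpa using h1
      · rw [List.Chain', List.isChain_append]
        refine ⟨h3, List.isChain_singleton x, ?_⟩
        intro a ha b hb
        simp only [List.head?_cons, Option.mem_def, Option.some.injEq] at hb
        subst hb
        rw [h2] at ha
        simp only [Option.mem_def, Option.some.injEq] at ha
        subst ha
        exact mem_inN.1 hw
  have hdisj : ∀ w₁ ∈ inN G x, ∀ w₂ ∈ inN G x, w₁ ≠ w₂ → Disjoint (F w₁) (F w₂) := by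
    intro w₁ _ w₂ _ hne'
    rw [Finset.disjoint_left]
    intro m hm1 hm2
    simp only [hF, Finset.mem_image, Set.Finite.mem_toFinset] at hm1 hm2
    obtain ⟨l₁, hl₁, he₁⟩ := hm1
    obtain ⟨l₂, hl₂, he₂⟩ := hm2
    have : l₁ = l₂ := happinj (he₁.trans he₂.symm)
    subst this
    have h1 : l₁.getLast? = some w₁ := hl₁.2.1
    have h2 : l₁.getLast? = some w₂ := hl₂.2.1
    rw [h1] at h2
    exact hne' (Option.some.inj h2)
  rw [pathCount_eq, Set.ncard_eq_toFinset_card _ (hfin x), hset, Finset.card_biUnion hdisj]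
  apply Finset.sum_congr rfl
  intro w _
  rw [hF]
  simp only
  rw [Finset.card_image_of_injective _ happinj, pathCount_eq,
    Set.ncard_eq_toFinset_card _ (hfin w)]

end Count

/-! ### The master counting lemmas -/

section Master

variable {V : Type} [DecidableEq V] {G : SDG V}

lemma ancestors_finite (G : SDG V) (b : V) : {w | G.dreach w b}.Finite := by
  apply Set.Finite.subset (Set.Finite.insert b (G.dir.image Prod.fst : Finset V).finite_toSet)
  intro w hw
  rcases Relation.ReflTransGen.cases_head hw with h | ⟨c, hc1, hc2⟩
  · exact Set.mem_insert_iff.2 (Or.inl h)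
  · exact Set.mem_insert_iff.2 (Or.inr (Finset.mem_coe.2 (Finset.mem_image.2 ⟨(w,c), hc1, rfl⟩)))

lemma measure_lt (hcyc : ¬ G.HasDirCycle) {w b : V} (h : (w, b) ∈ G.dir) :
    {z | G.dreach z w}.ncard < {z | G.dreach z b}.ncard := by
  apply Set.ncard_lt_ncard _ (ancestors_finite G b)
  rw [Set.ssubset_iff_of_subset (fun z hz => hz.tail h)]
  refine ⟨b, Relation.ReflTransGen.refl, ?_⟩
  intro hb
  exact hcyc ⟨(w,b), h, hb⟩

lemma measure_pos (a : V) : 1 ≤ {z | G.dreach z a}.ncard := by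
  rw [Nat.one_le_iff_ne_zero]
  intro h0
  have : a ∈ {z | G.dreach z a} := Relation.ReflTransGen.refl
  have hne : {z | G.dreach z a}.Nonempty := ⟨a, this⟩
  rw [← Set.ncard_pos (ancestors_finite G a)] at hne
  omega

/-- in a zone where every non-root node has a unique in-neighbour lying in the zone,
every zone node is reached by exactly one path from the root -/
lemma uniqueCount (hcyc : ¬ G.HasDirCycle) (P : V → Prop) (v : V)
    (hP : ∀ a, P a → a ≠ v → ∃ w, P w ∧ (∀ w', ((w',a) ∈ G.dir ↔ w' = w))) :
    ∀ a, P a → pathCount G v a = 1 := by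
  suffices h : ∀ (n : ℕ) (a : V), {z | G.dreach z a}.ncard ≤ n → P a → pathCount G v a = 1 by
    exact fun a ha => h _ a le_rfl ha
  intro n
  induction n with
  | zero =>
    intro a hn _
    have := measure_pos (G := G) a
    omega
  | succ n ih =>
    intro a hn ha
    by_cases hav : a = v
    · subst hav
      exact pathCount_self hcyc _
    · obtain ⟨w, hPw, hiff⟩ := hP a ha hav
      have hin : inN G a = {w} := by
        ext w'
        simp only [mem_inN, Finset.mem_singleton]
        exact hiff w'
      rw [pathCount_last_sum hcyc (fun h => hav h.symm), hin, Finset.sum_singleton]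
      apply ih w _ hPw
      have hlt := measure_lt hcyc ((hiff w).2 rfl)
      omega

open Classical in
/-- the directed edges leaving the zone `P` -/
noncomputable def exits (G : SDG V) (P : V → Prop) : Finset (V × V) :=
  G.dir.filter (fun e => P e.1 ∧ ¬ P e.2)

open Classical in
lemma mem_exits {P : V → Prop} {e : V × V} :
    e ∈ exits G P ↔ e ∈ G.dir ∧ P e.1 ∧ ¬ P e.2 := Finset.mem_filter

/-- master decomposition: the number of paths from the zone root to a node outside the
zone is the sum over zone-exiting edges of the path counts from their heads -/
lemma master_sum (hcyc : ¬ G.HasDirCycle) (P : V → Prop) (r : V) (hr : P r)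
    (hP : ∀ a, P a → a ≠ r → ∃ w, P w ∧ (∀ w', ((w',a) ∈ G.dir ↔ w' = w)))
    (hzero : ∀ e ∈ exits G P, ∀ w, P w → ¬ G.dreach e.2 w) :
    ∀ x, ¬ P x → pathCount G r x = ∑ e ∈ exits G P, pathCount G e.2 x := by
  classical
  suffices h : ∀ (n : ℕ) (x : V), {z | G.dreach z x}.ncard ≤ n → ¬ P x →
      pathCount G r x = ∑ e ∈ exits G P, pathCount G e.2 x by
    exact fun x hx => h _ x le_rfl hx
  intro n
  induction n with
  | zero =>
    intro x hn _
    have := measure_pos (G := G) x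
    omega
  | succ n ih =>
    intro x hn hx
    by_cases hrx : G.dreach r x
    · have hxr : x ≠ r := fun h => hx (h ▸ hr)
      rw [pathCount_last_sum hcyc (fun h => hxr h.symm)]
      have hterm : ∀ e ∈ exits G P, pathCount G e.2 x =
          (if e.2 = x then 1 else 0) +
            ∑ w ∈ inN G x, (if P w then 0 else pathCount G e.2 w) := by
        intro e he
        by_cases hex : e.2 = x
        · rw [if_pos hex, hex, pathCount_self hcyc]
          have hz : ∀ w ∈ inN G x, (if P w then 0 else pathCount G x w) = 0 := by
            intro w hw
            by_cases hPw : P w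
            · rw [if_pos hPw]
            · rw [if_neg hPw]
              apply pathCount_eq_zero
              intro hd
              exact hcyc ⟨(w,x), mem_inN.1 hw, hd⟩
          rw [Finset.sum_congr rfl hz, Finset.sum_const_zero]
          rfl
        · rw [if_neg hex, zero_add, pathCount_last_sum hcyc hex]
          apply Finset.sum_congr rfl
          intro w hw
          by_cases hPw : P w
          · rw [if_pos hPw]
            exact pathCount_eq_zero (hzero e he w hPw)
          · rw [if_neg hPw]
      rw [Finset.sum_congr rfl hterm, Finset.sum_add_distrib, Finset.sum_comm]
      have hLHS : ∀ w ∈ inN G x, pathCount G r w =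
          (if P w then 1 else 0) +
            (if P w then 0 else ∑ e ∈ exits G P, pathCount G e.2 w) := by
        intro w hw
        by_cases hPw : P w
        · rw [if_pos hPw, if_pos hPw]
          rw [uniqueCount hcyc P r hP w hPw]
        · rw [if_neg hPw, if_neg hPw, zero_add]
          apply ih w _ hPw
          have hlt := measure_lt hcyc (mem_inN.1 hw)
          omega
      rw [Finset.sum_congr rfl hLHS, Finset.sum_add_distrib]
      congr 1
      · -- the two indicator sums agree, via the bijection w ↦ (w, x)
        rw [← Finset.sum_filter, ← Finset.sum_filter, Finset.sum_const, Finset.sum_const,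
          smul_eq_mul, smul_eq_mul, mul_one, mul_one]
        apply Finset.card_bij (fun w _ => (w, x))
        · intro w hw
          have hw' := Finset.mem_filter.1 hw
          exact Finset.mem_filter.2 ⟨mem_exits.2 ⟨mem_inN.1 hw'.1, hw'.2, hx⟩, rfl⟩
        · intro w₁ h₁ w₂ h₂ he
          exact congrArg Prod.fst he
        · intro e he
          have he' := Finset.mem_filter.1 he
          have hee := mem_exits.1 he'.1
          refine ⟨e.1, Finset.mem_filter.2 ⟨mem_inN.2 ?_, hee.2.1⟩, ?_⟩
          · have h1 : (e.1, e.2) ∈ G.dir := by simpa using hee.1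
            rwa [he'.2] at h1
          · show (e.1, x) = e
            have : e = (e.1, e.2) := rfl
            rw [this]
            exact congrArg (Prod.mk e.1) he'.2.symm
      · apply Finset.sum_congr rfl
        intro w hw
        by_cases hPw : P w
        · rw [if_pos hPw]
          symm
          apply Finset.sum_eq_zero
          intro e he
          rw [if_pos hPw]
        · rw [if_neg hPw]
          apply Finset.sum_congr rfl
          intro e he
          rw [if_neg hPw]
    · rw [pathCount_eq_zero hrx]
      symm
      apply Finset.sum_eq_zero
      intro e he
      by_contra h0
      have hdz : G.dreach e.2 x := dreach_of_pathCount_pos h0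
      have h1 : pathCount G r e.1 = 1 := uniqueCount hcyc P r hP e.1 (mem_exits.1 he).2.1
      have hre1 : G.dreach r e.1 := dreach_of_pathCount_pos (by rw [h1]; omega)
      exact hrx ((hre1.tail (mem_exits.1 he).1).trans hdz)

end Master

/-! ### Orientation forcing outside root components -/

section Force

variable {V : Type} [DecidableEq V] {N G G₁ G₂ : SDG V}

lemma chain'_last_step {α : Type*} {R : α → α → Prop} {l : List α} (hR : l.Chain' R)
    {b : α} (hlast : l.getLast? = some b) (hlen : 2 ≤ l.length) :
    ∃ z, l.dropLast.getLast? = some z ∧ R z b := by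
  have hlne : l ≠ [] := by intro h; subst h; simp at hlen
  have hbval : l.getLast hlne = b := by
    have := List.getLast?_eq_getLast hlne
    rw [hlast] at this
    exact (Option.some.inj this).symm
  have hdecomp : l.dropLast ++ [b] = l := by
    conv_rhs => rw [← List.dropLast_concat_getLast hlne]
    rw [hbval]
  have hl'ne : l.dropLast ≠ [] := by
    intro hnil
    rw [hnil, List.nil_append] at hdecomp
    rw [← hdecomp] at hlen
    simp at hlen
  rw [← hdecomp, List.Chain', List.isChain_append] at hR
  refine ⟨l.dropLast.getLast hl'ne, List.getLast?_eq_getLast _, ?_⟩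
  exact hR.2.2 _ (List.getLast?_eq_getLast _) b rfl

/-- if an undirected edge admits both orientations across partners, then no node of its
undirected component has an incoming `N`-edge -/
lemma force_aux (hPr : N.Proper) (hG₁ : RootedPartner G₁ N) (hG₂ : RootedPartner G₂ N)
    {w y : V} (h1 : (w,y) ∈ G₁.dir) (h2 : (y,w) ∈ G₂.dir) (hund : s(w,y) ∈ N.undir)
    {q p0 : V} (hq : (p0, q) ∈ N.dir) (hqw : N.ureach q w) : False := by
  have hywN : (y,w) ∉ N.dir := undir_not_dir hPr (ustep_symm hund)
  have hS0 : ∀ (G : SDG V), RootedPartner G N → ∀ z, (z,q) ∈ G.dir → (z,q) ∈ N.dir := by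
    intro G hG z hz
    by_contra hzN
    have hz0 := (partner_extra_edge_ideg hG hz hzN).2
    have hz1 : 1 ≤ N.ideg q := ideg_pos_of_mem hq
    simp only at hz0
    omega
  obtain ⟨l, hl1, hl2, hl3⟩ := chain'_of_rtg hqw
  have hlne : l ≠ [] := by cases l with | nil => simp at hl1 | cons c t => simp
  obtain ⟨l', hc', hh', hlast', hnd, _⟩ := nodup_chain' l hl3 hlne
  rw [hl1] at hh'
  rw [hl2] at hlast'
  cases l' with
  | nil => simp at hh'
  | cons c rest =>
    simp only [List.head?_cons, Option.some.injEq] at hh'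
    subst hh'
    have hsst : (c :: rest).Chain' N.sstep := by
      apply List.IsChain.imp _ hc'
      intro a b hab
      exact Or.inr hab
    have hchain1 := partner_fwd_chain hPr hG₁ rest c hsst hnd (Or.inl (hS0 G₁ hG₁))
    have hchain2 := partner_fwd_chain hPr hG₂ rest c hsst hnd (Or.inl (hS0 G₂ hG₂))
    cases rest with
    | nil =>
      -- the path is trivial: q = w, so w has positive N-in-degree
      simp only [List.getLast?_singleton, Option.some.injEq] at hlast'
      subst hlast'
      exact hywN (hS0 G₂ hG₂ y h2)
    | cons d rest' =>
      have hlen : 2 ≤ (c :: d :: rest').length := by simp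
      obtain ⟨z, hz1, hz2⟩ := chain'_last_step hchain2 hlast' hlen
      obtain ⟨z', hz1', hz2'⟩ := chain'_last_step hchain1 hlast' hlen
      obtain ⟨z'', hz1'', hz2''⟩ := chain'_last_step hc' hlast' hlen
      rw [hz1] at hz1' hz1''
      have hzz' : z' = z := (Option.some.inj hz1').symm
      have hzz'' : z'' = z := (Option.some.inj hz1'').symm
      rw [hzz'] at hz2'
      rw [hzz''] at hz2''
      -- (z,w) is an oriented comp edge in G₂, so ideg_{G₂} w = 1, so y = z
      have hzwN : (z,w) ∉ N.dir := undir_not_dir hPr hz2''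
      have hideg := (partner_extra_edge_ideg hG₂ hz2 hzwN).1
      simp only at hideg
      have hyz : y = z := in_unique_of_ideg_one hideg hz2 y h2
      subst hyz
      -- then (y,w) ∈ G₁.dir contradicts (w,y) ∈ G₁.dir
      exact (partner_orient_iff hPr hG₁ hund).1 h1 hz2'

/-- orientation forcing: an undirected edge oriented both ways across two partners
lies in a root component -/
lemma force (hPr : N.Proper) (hG₁ : RootedPartner G₁ N) (hG₂ : RootedPartner G₂ N)
    {w y : V} (h1 : (w,y) ∈ G₁.dir) (h2 : (y,w) ∈ G₂.dir) (hund : s(w,y) ∈ N.undir) :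
    InRootComp N w := by
  intro u hu
  induction hu using Relation.ReflTransGen.head_induction_on with
  | refl => exact .refl
  | @head a c hac hcb ih =>
    rcases hac with hdir | hu'
    · exfalso
      have hcw : N.ureach c w := ureach_of_sim hPr hG₁ hcb ih
      exact force_aux hPr hG₁ hG₂ h1 h2 hund hdir hcw
    · exact ih.trans (.single (Or.inr (ustep_symm hu')))

lemma step_transfer (hPr : N.Proper) (hG₁ : RootedPartner G₁ N) (hG₂ : RootedPartner G₂ N)
    {w y : V} (hw : ¬ InRootComp N w) (he : (w,y) ∈ G₁.dir) :
    (w,y) ∈ G₂.dir ∧ ¬ InRootComp N y := by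
  by_cases hND : (w,y) ∈ N.dir
  · refine ⟨partner_dir_subset hG₂ hND, ?_⟩
    intro hy
    exact no_semi_cycle hPr hG₁ hND (hy w (.single (Or.inl hND)))
  · have hund : s(w,y) ∈ N.undir := partner_extra_undir hG₁ he hND
    have h2 : (w,y) ∈ G₂.dir := by
      by_contra h2
      have hyw : (y,w) ∈ G₂.dir := by
        by_contra hyw
        exact h2 ((partner_orient_iff hPr hG₂ hund).2 hyw)
      exact hw (force hPr hG₁ hG₂ he hyw hund)
    refine ⟨h2, ?_⟩
    intro hy
    exact hw (InRootComp_of_sim hy (sim_symm (ustep_sim hund)))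

lemma chain_transfer (hPr : N.Proper) (hG₁ : RootedPartner G₁ N) (hG₂ : RootedPartner G₂ N) :
    ∀ (l : List V) (c : V), ¬ InRootComp N c →
      (c :: l).Chain' G₁.dstep → (c :: l).Chain' G₂.dstep := by
  intro l
  induction l with
  | nil => intro c _ _; exact List.isChain_singleton c
  | cons d l' ih =>
    intro c hc hch
    obtain ⟨hstep, hd⟩ := step_transfer hPr hG₁ hG₂ hc (List.isChain_cons_cons.1 hch).1
    exact List.isChain_cons_cons.2 ⟨hstep, ih d hd (List.isChain_cons_cons.1 hch).2⟩

lemma pathsSet_subset_transfer (hPr : N.Proper) (hG₁ : RootedPartner G₁ N)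
    (hG₂ : RootedPartner G₂ N) {z : V} (hz : ¬ InRootComp N z) (x : V) :
    pathsSet G₁ z x ⊆ pathsSet G₂ z x := by
  rintro l ⟨h1, h2, h3⟩
  cases l with
  | nil => simp at h1
  | cons c rest =>
    simp only [List.head?_cons, Option.some.injEq] at h1
    subst h1
    exact ⟨rfl, h2, chain_transfer hPr hG₁ hG₂ rest c hz h3⟩

/-- partner-invariance of path counts from nodes outside root components -/
lemma pathCount_invariant (hPr : N.Proper) (hG₁ : RootedPartner G₁ N)
    (hG₂ : RootedPartner G₂ N) {z : V} (hz : ¬ InRootComp N z) (x : V) :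
    pathCount G₁ z x = pathCount G₂ z x := by
  rw [pathCount_eq, pathCount_eq]
  congr 1
  exact Set.Subset.antisymm (pathsSet_subset_transfer hPr hG₁ hG₂ hz x)
    (pathsSet_subset_transfer hPr hG₂ hG₁ hz x)

end Force

/-! ### Zone lemmas for root components -/

section Zone

variable {V : Type} [DecidableEq V] {N G : SDG V}

lemma comp_in_edge (hPr : N.Proper) (hG : RootedPartner G N) (ht : InRootComp N t)
    {b w : V} (hb : sim N t b) (he : (w,b) ∈ G.dir) :
    (w,b) ∉ N.dir ∧ s(w,b) ∈ N.undir ∧ sim N t w ∧ G.ideg b = 1 := by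
  have hbR : InRootComp N b := InRootComp_of_sim ht hb
  obtain ⟨h1, h2, h3, h4⟩ := rootcomp_in_edge hPr hG hbR he
  exact ⟨h1, h2, sim_trans hb (sim_symm h3), h4⟩

lemma dreach_backward_closed {H : SDG V} (P : V → Prop)
    (hstep : ∀ p w, (p,w) ∈ H.dir → P w → P p) {z b : V} (hd : H.dreach z b) (hb : P b) :
    P z := by
  induction hd with
  | refl => exact hb
  | tail hzc hstep' ih => exact ih (hstep _ _ hstep' hb)

lemma dreach_into_comp (hPr : N.Proper) (hG : RootedPartner G N) (ht : InRootComp N t)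
    {z b : V} (hb : sim N t b) (hd : G.dreach z b) : sim N t z :=
  dreach_backward_closed (fun v => sim N t v)
    (fun p w hpw hw => (comp_in_edge hPr hG ht hw hpw).2.2.1) hd hb

/-- two ancestors of a common node within a root component are comparable -/
lemma comp_compar (hPr : N.Proper) (hG : RootedPartner G N) (ht : InRootComp N t) :
    ∀ (n : ℕ) (b : V), {z | G.dreach z b}.ncard ≤ n → sim N t b →
      ∀ p q, G.dreach p b → G.dreach q b → G.dreach p q ∨ G.dreach q p := by
  intro n
  induction n with
  | zero =>
    intro b hn _ _ _ _ _
    have := measure_pos (G := G) b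
    omega
  | succ n ih =>
    intro b hn hb p q hp hq
    by_cases hpb : p = b
    · exact Or.inr (hpb ▸ hq)
    by_cases hqb : q = b
    · exact Or.inl (hqb ▸ hp)
    rcases Relation.ReflTransGen.cases_tail hp with h | ⟨c₁, hc₁, he₁⟩
    · exact absurd h.symm hpb
    rcases Relation.ReflTransGen.cases_tail hq with h | ⟨c₂, hc₂, he₂⟩
    · exact absurd h.symm hqb
    have hideg := (comp_in_edge hPr hG ht hb he₁).2.2.2
    have hc₁T := (comp_in_edge hPr hG ht hb he₁).2.2.1
    have hcc : c₂ = c₁ := in_unique_of_ideg_one hideg he₁ c₂ he₂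
    subst hcc
    apply ih c₂ _ hc₁T p q hc₁ hc₂
    have := measure_lt (partner_noCycle hG) he₁
    omega

end Zone

/-! ### The re-rooting construction -/

section Reroot

variable {V : Type} [DecidableEq V] {N G : SDG V}

open Classical in
noncomputable def flipSet (N G : SDG V) (t a : V) : Finset (V × V) :=
  G.dir.filter (fun e => e ∉ N.dir ∧ sim N t e.2 ∧ G.dreach e.2 a)

open Classical in
noncomputable def reroot (N G : SDG V) (t a : V) : SDG V :=
  ⟨∅, (G.dir \ flipSet N G t a) ∪ (flipSet N G t a).image Prod.swap⟩

open Classical in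
lemma mem_flipSet {t a : V} {e : V × V} : e ∈ flipSet N G t a ↔
    e ∈ G.dir ∧ e ∉ N.dir ∧ sim N t e.2 ∧ G.dreach e.2 a := Finset.mem_filter

lemma reroot_undir {t a : V} : (reroot N G t a).undir = ∅ := rfl

lemma mem_reroot_dir {t a : V} {e : V × V} : e ∈ (reroot N G t a).dir ↔
    (e ∈ G.dir ∧ e ∉ flipSet N G t a) ∨ Prod.swap e ∈ flipSet N G t a := by
  show e ∈ (G.dir \ flipSet N G t a) ∪ (flipSet N G t a).image Prod.swap ↔ _
  rw [Finset.mem_union, Finset.mem_sdiff]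
  constructor
  · rintro (h | h)
    · exact Or.inl h
    · obtain ⟨f, hf, rfl⟩ := Finset.mem_image.1 h
      exact Or.inr (by simpa using hf)
  · rintro (h | h)
    · exact Or.inl h
    · exact Or.inr (Finset.mem_image.2 ⟨Prod.swap e, h, by simp⟩)

lemma reroot_directs (hPr : N.Proper) (hG : RootedPartner G N) (t a : V) :
    Directs N (reroot N G t a) := by
  have hGd := hG.1.1
  refine ⟨by simp [reroot_undir], ?_, ?_, ?_⟩
  · intro e he
    rw [mem_reroot_dir]
    exact Or.inl ⟨partner_dir_subset hG he, fun hf => (mem_flipSet.1 hf).2.1 he⟩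
  · intro e he hne
    rw [mem_reroot_dir] at he
    constructor
    · rcases he with ⟨h1, _⟩ | h
      · exact partner_extra_undir hG h1 hne
      · have h1 := (mem_flipSet.1 h).1
        have h2 := (mem_flipSet.1 h).2.1
        have := partner_extra_undir hG h1 h2
        rwa [Sym2.eq_swap] at this
    · exact Finset.notMem_empty _
  · intro p hp hp'
    have hnil : p ∉ G.undir := by rw [hG.2]; exact Finset.notMem_empty _
    obtain ⟨e₀, ⟨he1, he2, he3⟩, huniq⟩ := hGd.2.2.2 p hp hnil
    by_cases hf : e₀ ∈ flipSet N G t a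
    · refine ⟨Prod.swap e₀, ⟨?_, ?_, ?_⟩, ?_⟩
      · exact mem_reroot_dir.2 (Or.inr (by simpa using hf))
      · have hu : s(e₀.1, e₀.2) ∈ N.undir := he3 ▸ hp
        have hu' : s(e₀.2, e₀.1) ∈ N.undir := by rwa [Sym2.eq_swap]
        intro hN
        exact undir_not_dir hPr hu' hN
      · show s(e₀.2, e₀.1) = p
        rw [Sym2.eq_swap]
        exact he3
      · rintro e' ⟨h1', h2', h3'⟩
        rw [mem_reroot_dir] at h1'
        rcases h1' with ⟨hg, hnf⟩ | hsw
        · have : e' = e₀ := huniq e' ⟨hg, h2', h3'⟩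
          exact absurd (this ▸ hf) hnf
        · have hswg := (mem_flipSet.1 hsw).1
          have hswn := (mem_flipSet.1 hsw).2.1
          have hswu : s(e'.2, e'.1) = p := by
            rw [Sym2.eq_swap]
            exact h3'
          have : Prod.swap e' = e₀ := huniq _ ⟨hswg, hswn, hswu⟩
          rw [← this]
          simp
    · refine ⟨e₀, ⟨mem_reroot_dir.2 (Or.inl ⟨he1, hf⟩), he2, he3⟩, ?_⟩
      rintro e' ⟨h1', h2', h3'⟩
      rw [mem_reroot_dir] at h1'
      rcases h1' with ⟨hg, _⟩ | hsw
      · exact huniq e' ⟨hg, h2', h3'⟩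
      · exfalso
        have hswg := (mem_flipSet.1 hsw).1
        have hswn := (mem_flipSet.1 hsw).2.1
        have hswu : s(e'.2, e'.1) = p := by
          rw [Sym2.eq_swap]
          exact h3'
        have := huniq _ ⟨hswg, hswn, hswu⟩
        exact hf (this ▸ hsw)

lemma flipSet_ends_in_comp (hPr : N.Proper) (hG : RootedPartner G N) {t a : V}
    {e : V × V} (he : e ∈ flipSet N G t a) : sim N t e.1 ∧ sim N t e.2 := by
  obtain ⟨h1, h2, h3, _⟩ := mem_flipSet.1 he
  have hu : s(e.1, e.2) ∈ N.undir := partner_extra_undir hG h1 h2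
  exact ⟨sim_trans h3 (sim_symm (ustep_sim hu)), h3⟩

lemma reroot_mem_outside (hPr : N.Proper) (hG : RootedPartner G N) {t a : V}
    {e : V × V} (he2 : ¬ sim N t e.2) : (e ∈ (reroot N G t a).dir ↔ e ∈ G.dir) := by
  rw [mem_reroot_dir]
  constructor
  · rintro (⟨h, _⟩ | h)
    · exact h
    · exact absurd (flipSet_ends_in_comp hPr hG h).1 he2
  · intro h
    exact Or.inl ⟨h, fun hf => he2 (mem_flipSet.1 hf).2.2.1⟩

lemma reroot_ideg_outside (hPr : N.Proper) (hG : RootedPartner G N) {t a w : V}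
    (hw : ¬ sim N t w) : (reroot N G t a).ideg w = G.ideg w := by
  unfold ideg
  congr 1
  ext e
  rw [Finset.mem_filter, Finset.mem_filter]
  constructor
  · rintro ⟨h1, h2⟩
    exact ⟨(reroot_mem_outside hPr hG (h2 ▸ hw)).1 h1, h2⟩
  · rintro ⟨h1, h2⟩
    exact ⟨(reroot_mem_outside hPr hG (h2 ▸ hw)).2 h1, h2⟩

/-- the in-edges of a component node in the re-rooted graph -/
lemma reroot_in_edge (hPr : N.Proper) (hG : RootedPartner G N) (ht : InRootComp N t)
    {a w p : V} (hw : sim N t w) (hp : (p, w) ∈ (reroot N G t a).dir) :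
    sim N t p ∧
      ((¬ G.dreach w a ∧ (p,w) ∈ G.dir) ∨
        (G.dreach w a ∧ (w,p) ∈ G.dir ∧ (w,p) ∉ N.dir ∧ sim N t p ∧ G.dreach p a)) := by
  rcases mem_reroot_dir.1 hp with ⟨h1, h2⟩ | h
  · have hc := comp_in_edge hPr hG ht hw h1
    have hnd : ¬ G.dreach w a := by
      intro hd
      exact h2 (mem_flipSet.2 ⟨h1, hc.1, hw, hd⟩)
    exact ⟨hc.2.2.1, Or.inl ⟨hnd, h1⟩⟩
  · obtain ⟨hg, hn, hsim, hd⟩ := mem_flipSet.1 h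
    simp only [Prod.swap] at hg hn hsim hd
    have hda : G.dreach w a := Relation.ReflTransGen.head hg hd
    exact ⟨hsim, Or.inr ⟨hda, hg, hn, hsim, hd⟩⟩

lemma reroot_ideg_a (hPr : N.Proper) (hG : RootedPartner G N) (ht : InRootComp N t)
    {a : V} (ha : sim N t a) : (reroot N G t a).ideg a = 0 := by
  unfold ideg
  rw [Finset.card_eq_zero, Finset.eq_empty_iff_forall_notMem]
  intro e he
  obtain ⟨h1, h2⟩ := Finset.mem_filter.1 he
  have he' : (e.1, a) ∈ (reroot N G t a).dir := by
    have he2 : e = (e.1, a) := Prod.ext rfl h2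
    rw [← he2]
    exact h1
  obtain ⟨_, hcase⟩ := reroot_in_edge hPr hG ht ha he'
  rcases hcase with ⟨hnd, _⟩ | ⟨_, hwp, _, _, hd⟩
  · exact hnd Relation.ReflTransGen.refl
  · exact partner_noCycle hG ⟨(a, e.1), hwp, hd⟩

lemma reroot_uturn (hPr : N.Proper) (hG : RootedPartner G N) (ht : InRootComp N t)
    {w q₁ q₂ : V} (hne : q₁ ≠ q₂) (h₁ : (w,q₁) ∈ G.dir) (h₂ : (w,q₂) ∈ G.dir)
    (hq₂ : sim N t q₂) (hd : G.dreach q₁ q₂) : False := by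
  rcases Relation.ReflTransGen.cases_tail hd with h | ⟨c, hc, he⟩
  · exact hne h.symm
  · have hideg := (comp_in_edge hPr hG ht hq₂ he).2.2.2
    have hcw : w = c := in_unique_of_ideg_one hideg he w h₂
    rw [← hcw] at hc
    exact partner_noCycle hG ⟨(w, q₁), h₁, hc⟩

lemma reroot_ideg_comp_le (hPr : N.Proper) (hG : RootedPartner G N) (ht : InRootComp N t)
    {a w : V} (ha : sim N t a) (hw : sim N t w) : (reroot N G t a).ideg w ≤ 1 := by
  unfold ideg
  rw [Finset.card_le_one]
  intro e₁ he₁ e₂ he₂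
  obtain ⟨hm₁, hs₁⟩ := Finset.mem_filter.1 he₁
  obtain ⟨hm₂, hs₂⟩ := Finset.mem_filter.1 he₂
  have he₁' : (e₁.1, w) ∈ (reroot N G t a).dir := by rw [← hs₁]; simpa using hm₁
  have he₂' : (e₂.1, w) ∈ (reroot N G t a).dir := by rw [← hs₂]; simpa using hm₂
  obtain ⟨hT₁, hc₁⟩ := reroot_in_edge hPr hG ht hw he₁'
  obtain ⟨hT₂, hc₂⟩ := reroot_in_edge hPr hG ht hw he₂'
  suffices h : e₁.1 = e₂.1 by
    have : e₁ = (e₁.1, w) := Prod.ext rfl hs₁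
    have h2 : e₂ = (e₂.1, w) := Prod.ext rfl hs₂
    rw [this, h2, h]
  rcases hc₁ with ⟨hnd, hg₁⟩ | ⟨hda, hg₁, _, hT₁', hd₁⟩
  · rcases hc₂ with ⟨_, hg₂⟩ | ⟨hda, _, _, _, _⟩
    · -- both old in-edges: uniqueness of in-edge in G
      have hideg := (comp_in_edge hPr hG ht hw hg₁).2.2.2
      exact (in_unique_of_ideg_one hideg hg₂ e₁.1 hg₁).symm ▸ rfl
    · exact absurd hda hnd
  · rcases hc₂ with ⟨hnd, _⟩ | ⟨_, hg₂, _, hT₂', hd₂⟩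
    · exact absurd hda hnd
    · -- both flipped out-edges: comparability
      by_contra hne
      rcases comp_compar hPr hG ht {z | G.dreach z a}.ncard a le_rfl ha e₁.1 e₂.1 hd₁ hd₂ with
        h | h
      · exact reroot_uturn hPr hG ht hne hg₁ hg₂ hT₂' h
      · exact reroot_uturn hPr hG ht (Ne.symm hne) hg₂ hg₁ hT₁' h

lemma reroot_hybrid (hPr : N.Proper) (hG : RootedPartner G N) (ht : InRootComp N t)
    {a : V} (ha : sim N t a) : (reroot N G t a).hybridEdges = N.hybridEdges := by
  have hGh : G.hybridEdges = N.hybridEdges := hG.1.2.2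
  ext e
  unfold hybridEdges
  rw [Finset.mem_filter, Finset.mem_filter]
  by_cases hT : sim N t e.2
  · constructor
    · rintro ⟨h1, h2⟩
      have := reroot_ideg_comp_le hPr hG ht ha hT
      omega
    · rintro ⟨h1, h2⟩
      exfalso
      have he' : (e.1, e.2) ∈ G.dir := partner_dir_subset hG (by simpa using h1)
      have := (comp_in_edge hPr hG ht hT he').1
      exact this (by simpa using h1)
  · rw [reroot_ideg_outside hPr hG hT]
    constructor
    · rintro ⟨h1, h2⟩
      have hGe : e ∈ G.hybridEdges :=
        Finset.mem_filter.2 ⟨(reroot_mem_outside hPr hG hT).1 h1, h2⟩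
      rw [hGh] at hGe
      exact Finset.mem_filter.1 hGe
    · rintro ⟨h1, h2⟩
      have hNe : e ∈ N.hybridEdges := Finset.mem_filter.2 ⟨h1, h2⟩
      rw [← hGh] at hNe
      obtain ⟨hGe1, hGe2⟩ := Finset.mem_filter.1 hNe
      exact ⟨(reroot_mem_outside hPr hG hT).2 hGe1, hGe2⟩

lemma reroot_reach (hPr : N.Proper) (hG : RootedPartner G N) (ht : InRootComp N t)
    {a w : V} (ha : sim N t a) (hw : sim N t w) : (reroot N G t a).dreach a w := by
  have hsim : sim N a w := sim_trans (sim_symm ha) hw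
  have hur : N.ureach a w := ureach_of_sim hPr hG hsim.1 hsim.2
  obtain ⟨l, hl1, hl2, hl3⟩ := chain'_of_rtg hur
  have hlne : l ≠ [] := by cases l with | nil => simp at hl1 | cons c rest => simp
  have hl3' : l.Chain' N.sstep := List.IsChain.imp (fun _ _ h => Or.inr h) hl3
  obtain ⟨l', hc', hh', hlast', hnd, _⟩ := nodup_chain' l hl3' hlne
  rw [hl1] at hh'
  rw [hl2] at hlast'
  cases l' with
  | nil => simp at hh'
  | cons c rest =>
    simp only [List.head?_cons, Option.some.injEq] at hh'
    have hh'' : a = c := hh'.symm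
    subst hh''
    have hS0 : ∀ w', (w', a) ∈ (reroot N G t a).dir → (w', a) ∈ N.dir := by
      intro w' hw'
      exfalso
      have := ideg_pos_of_mem hw'
      rw [reroot_ideg_a hPr hG ht ha] at this
      omega
    have hfwd := fwd_chain hPr (reroot_directs hPr hG t a).2.1
      (fun u v h => orient_iff hPr (reroot_directs hPr hG t a) rfl h)
      (fun e he hne => extra_edge_ideg (reroot_directs hPr hG t a)
        (reroot_hybrid hPr hG ht ha) he hne)
      rest a hc' hnd (Or.inl hS0)
    exact rtg_of_chain' _ hfwd a w rfl hlast'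

lemma chain'_imp_mem {α : Type*} {R S : α → α → Prop} :
    ∀ l : List α, l.Chain' R → (∀ c d, c ∈ l → d ∈ l → R c d → S c d) → l.Chain' S := by
  intro l
  induction l with
  | nil => intro _ _; exact List.isChain_nil
  | cons c rest ih =>
    intro hc hcd
    cases rest with
    | nil => exact List.isChain_singleton c
    | cons d rest' =>
      rw [List.Chain', List.isChain_cons_cons] at hc ⊢
      refine ⟨hcd c d (List.mem_cons_self)
        (List.mem_cons_of_mem _ (List.mem_cons_self)) hc.1, ?_⟩
      exact ih hc.2 (fun x y hx hy =>
        hcd x y (List.mem_cons_of_mem _ hx) (List.mem_cons_of_mem _ hy))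

lemma no_cycle_zone {H : SDG V} {L : List V} (a : V)
    (hinL : ∀ c ∈ L, ∃ d ∈ L, (d,c) ∈ H.dir)
    (hideg : ∀ c ∈ L, H.ideg c ≤ 1) (ha0 : H.ideg a = 0) :
    ∀ (n : ℕ) (m : List V), m.length ≤ n → m.Chain' H.dstep → m.head? = some a →
      ∀ c ∈ L, m.getLast? = some c → False := by
  intro n
  induction n with
  | zero =>
    intro m hlen _ hhead _ _ _
    cases m with
    | nil => simp at hhead
    | cons x m' => simp at hlen
  | succ n ih =>
    intro m hlen hch hhead c hcL hlast
    obtain ⟨d, hdL, hd⟩ := hinL c hcL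
    by_cases h2 : 2 ≤ m.length
    · obtain ⟨z, hz1, hz2⟩ := chain'_last_step hch hlast h2
      have hzd : z = d := by
        by_contra hne
        have ht2 := two_le_ideg hz2 hd hne
        have := hideg c hcL
        omega
      rw [hzd] at hz1
      have hdl : m.dropLast.length ≤ n := by
        rw [List.length_dropLast]
        omega
      have hdh : m.dropLast.head? = some a := by
        cases m with
        | nil => simp at hhead
        | cons x m' =>
          cases m' with
          | nil => simp at h2
          | cons y r =>
            simpa using hhead
      exact ih m.dropLast hdl (hch.prefix (List.dropLast_prefix m)) hdh d hdL hz1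
    · cases m with
      | nil => simp at hhead
      | cons x m' =>
        cases m' with
        | nil =>
          simp only [List.head?_cons, Option.some.injEq] at hhead
          simp only [List.getLast?_singleton, Option.some.injEq] at hlast
          rw [← hhead, hlast] at ha0
          have := ideg_pos_of_mem hd
          omega
        | cons y r => simp at h2

lemma reroot_noCycle (hPr : N.Proper) (hG : RootedPartner G N) (ht : InRootComp N t)
    {a : V} (ha : sim N t a) : ¬ (reroot N G t a).HasDirCycle := by
  rintro ⟨⟨p,q⟩, he, hdr⟩
  obtain ⟨l, hl1, hl2, hl3⟩ := chain'_of_rtg hdr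
  by_cases hT : ∃ c ∈ l, sim N t c
  · obtain ⟨c₀, hc₀l, hc₀T⟩ := hT
    have hallT : ∀ c ∈ l, sim N t c := by
      intro c hc
      have h1 : (reroot N G t a).dreach c p := mem_reaches_last l hl3 p c hl2 hc
      have h2 : (reroot N G t a).dreach q c₀ := head_reaches_mem l hl3 q c₀ hl1 hc₀l
      have h3 : (reroot N G t a).dreach c c₀ := (h1.tail he).trans h2
      exact dreach_backward_closed (fun v => sim N t v)
        (fun p' w' hpw hw' => (reroot_in_edge hPr hG ht hw' hpw).1) h3 hc₀T
    have hinL : ∀ c ∈ l, ∃ d ∈ l, (d,c) ∈ (reroot N G t a).dir := by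
      intro c hc
      rcases mem_pred_of_chain' l hl3 q c hl1 hc with h | ⟨d, hd1, hd2⟩
      · refine ⟨p, List.mem_of_mem_getLast? (by rw [hl2]; rfl), ?_⟩
        rw [h]
        exact he
      · exact ⟨d, hd1, hd2⟩
    obtain ⟨m, hm1, hm2, hm3⟩ := chain'_of_rtg (reroot_reach hPr hG ht ha hc₀T)
    exact no_cycle_zone a hinL (fun c hc => reroot_ideg_comp_le hPr hG ht ha (hallT c hc))
      (reroot_ideg_a hPr hG ht ha) m.length m le_rfl hm3 hm1 c₀ hc₀l hm2
  · push_neg at hT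
    have hq : ¬ sim N t q := hT q (List.mem_of_mem_head? (by rw [hl1]; rfl))
    have hchainG : l.Chain' G.dstep := chain'_imp_mem l hl3 (fun c d hc hd hcd =>
      (reroot_mem_outside hPr hG (hT d hd)).1 hcd)
    exact partner_noCycle hG ⟨(p,q), (reroot_mem_outside hPr hG hq).1 he,
      rtg_of_chain' l hchainG q p hl1 hl2⟩

lemma directed_unique (M H : SDG V) (hM : M.IsDirected) (hD : Directs M H)
    (hH : H.IsDirected) : H = M := by
  have hdir : H.dir = M.dir := by
    apply Finset.Subset.antisymm _ hD.2.1
    intro e he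
    by_contra hne
    have h1 := (hD.2.2.1 e he hne).1
    rw [hM] at h1
    exact absurd h1 (Finset.notMem_empty _)
  have heta : H = ⟨H.undir, H.dir⟩ := rfl
  rw [heta, hH, hdir, ← hM]

lemma acyclic_of_noCycle {M : SDG V} (hM : M.IsDirected) (hc : ¬ M.HasDirCycle) :
    M.Acyclic := by
  intro H hD hH
  rw [directed_unique M H hM hD hH]
  exact hc

lemma reroot_partner (hPr : N.Proper) (hG : RootedPartner G N) (ht : InRootComp N t)
    {a : V} (ha : sim N t a) : RootedPartner (reroot N G t a) N :=
  ⟨⟨reroot_directs hPr hG t a, acyclic_of_noCycle rfl (reroot_noCycle hPr hG ht ha),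
    reroot_hybrid hPr hG ht ha⟩, rfl⟩

/-- the re-rooted partner orients every component edge at the new root away from it -/
lemma reroot_edge_out (hPr : N.Proper) (hG : RootedPartner G N) (ht : InRootComp N t)
    {a c : V} (ha : sim N t a) (h : s(a,c) ∈ N.undir) :
    (a, c) ∈ (reroot N G t a).dir := by
  have hsw : s(c,a) ∈ N.undir := by rwa [Sym2.eq_swap]
  by_cases hg : (a,c) ∈ G.dir
  · apply mem_reroot_dir.2
    apply Or.inl
    refine ⟨hg, ?_⟩
    intro hf
    have hd := (mem_flipSet.1 hf).2.2.2
    exact partner_noCycle hG ⟨(a,c), hg, hd⟩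
  · have hca : (c,a) ∈ G.dir := by
      by_contra hca
      exact hg ((partner_orient_iff hPr hG h).2 hca)
    apply mem_reroot_dir.2
    apply Or.inr
    exact mem_flipSet.2 ⟨hca, undir_not_dir hPr hsw, ha, Relation.ReflTransGen.refl⟩

end Reroot

/-! ### Assembly lemmas -/

section Assembly

variable {V : Type} [DecidableEq V] {N G : SDG V} {t : V}

lemma partnerFor_root (ht : InRootComp N t) {ρ : V → V}
    (hρ : RootChoice N ρ) (hGp : PartnerFor N ρ G) :
    sim N t (ρ t) ∧ G.ideg (ρ t) = 0 ∧
      (∀ z, sim N t z → G.ideg z = 0 → z = ρ t) := by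
  have h1 : sim N t (ρ t) := (hρ.1 t ht).1
  have h2 : G.ideg (ρ t) = 0 := by
    have : ρ t ∈ {v | G.ideg v = 0} := by
      rw [hGp.2]
      exact ⟨t, ht, rfl⟩
    exact this
  refine ⟨h1, h2, ?_⟩
  intro z hz h0
  have hmem : z ∈ ρ '' {v | InRootComp N v} := by
    rw [← hGp.2]
    exact h0
  obtain ⟨s', hs, rfl⟩ := hmem
  have hsz : sim N s' (ρ s') := (hρ.1 s' hs).1
  have hst : sim N s' t := sim_trans hsz (sim_symm hz)
  exact (hρ.1 t ht).2 s' hs hst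

lemma zoneT_hP (hPr : N.Proper) (ht : InRootComp N t) {ρ : V → V}
    (hρ : RootChoice N ρ) (hGp : PartnerFor N ρ G) :
    ∀ b, sim N t b → b ≠ ρ t →
      ∃ w, sim N t w ∧ (∀ w', ((w',b) ∈ G.dir ↔ w' = w)) := by
  intro b hb hbr
  have hG := hGp.1
  have h0 : G.ideg b ≠ 0 := by
    intro h0
    exact hbr ((partnerFor_root ht hρ hGp).2.2 b hb h0)
  obtain ⟨e, he⟩ := Finset.card_pos.1 (Nat.pos_of_ne_zero h0)
  obtain ⟨he1, he2⟩ := Finset.mem_filter.1 he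
  have hwb : (e.1, b) ∈ G.dir := by
    have : e = (e.1, b) := Prod.ext rfl he2
    rw [← this]
    exact he1
  have hc := comp_in_edge hPr hG ht hb hwb
  refine ⟨e.1, hc.2.2.1, ?_⟩
  intro w'
  constructor
  · intro hw'
    exact in_unique_of_ideg_one hc.2.2.2 hwb w' hw'
  · rintro rfl
    exact hwb

open Classical in
/-- the directed edges leaving a root component -/
noncomputable def compExits (N : SDG V) (t : V) : Finset (V × V) :=
  N.dir.filter (fun e => sim N t e.1)

open Classical in
lemma mem_compExits {e : V × V} : e ∈ compExits N t ↔ e ∈ N.dir ∧ sim N t e.1 :=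
  Finset.mem_filter

lemma dir_target_not_root (hPr : N.Proper) (hG : RootedPartner G N) {e : V × V}
    (he : e ∈ N.dir) : ¬ InRootComp N e.2 := by
  intro hR
  have he' : (e.1, e.2) ∈ N.dir := by simpa using he
  exact no_semi_cycle hPr hG he' (hR e.1 (.single (Or.inl he')))

lemma zoneT_exits (hPr : N.Proper) (hG : RootedPartner G N) (ht : InRootComp N t) :
    exits G (fun v => sim N t v) = compExits N t := by
  ext e
  rw [mem_exits, mem_compExits]
  constructor
  · rintro ⟨h1, h2, h3⟩
    by_cases hN : e ∈ N.dir
    · exact ⟨hN, h2⟩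
    · exfalso
      have hu : s(e.1,e.2) ∈ N.undir := partner_extra_undir hG h1 hN
      exact h3 (sim_trans h2 (ustep_sim hu))
  · rintro ⟨h1, h2⟩
    refine ⟨partner_dir_subset hG h1, h2, ?_⟩
    intro h3
    exact dir_target_not_root hPr hG h1 (InRootComp_of_sim ht h3)

lemma zoneT_hzero (hPr : N.Proper) (hG : RootedPartner G N) (ht : InRootComp N t) :
    ∀ e ∈ exits G (fun v => sim N t v), ∀ w, sim N t w → ¬ G.dreach e.2 w := by
  intro e he w hw hd
  exact (mem_exits.1 he).2.2 (dreach_into_comp hPr hG ht hw hd)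

lemma partner_formula (hPr : N.Proper) (ht : InRootComp N t) {ρ : V → V}
    (hρ : RootChoice N ρ) (hGp : PartnerFor N ρ G) {x : V} (hx : ¬ sim N t x) :
    pathCount G (ρ t) x = ∑ e ∈ compExits N t, pathCount G e.2 x := by
  have hG := hGp.1
  rw [← zoneT_exits hPr hG ht]
  exact master_sum (partner_noCycle hG) (fun v => sim N t v) (ρ t)
    (partnerFor_root ht hρ hGp).1 (zoneT_hP hPr ht hρ hGp) (zoneT_hzero hPr hG ht) x hx

lemma zone_pathCount_one (hPr : N.Proper) (ht : InRootComp N t) {ρ : V → V}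
    (hρ : RootChoice N ρ) (hGp : PartnerFor N ρ G) {x : V} (hx : sim N t x) :
    pathCount G (ρ t) x = 1 :=
  uniqueCount (partner_noCycle hGp.1) (fun v => sim N t v) (ρ t)
    (zoneT_hP hPr ht hρ hGp) x hx

/-! side zones of a component edge -/

/-- the set of nodes reachable from `v` by undirected edges avoiding the edge `{u,v}` -/
def sideReach (N : SDG V) (u v : V) : V → Prop :=
  Relation.ReflTransGen (fun p q => N.ustep p q ∧ s(p,q) ≠ s(u,v)) v

open Classical in
/-- the directed edges leaving the `v`-side of the edge `{u,v}` -/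
noncomputable def sideExits (N : SDG V) (u v : V) : Finset (V × V) :=
  N.dir.filter (fun e => sideReach N u v e.1)

open Classical in
lemma mem_sideExits {u v : V} {e : V × V} :
    e ∈ sideExits N u v ↔ e ∈ N.dir ∧ sideReach N u v e.1 := Finset.mem_filter

lemma side_sub_comp {u v b : V} (hv : sim N t v) (h : sideReach N u v b) : sim N t b := by
  induction h with
  | refl => exact hv
  | tail _ hst ih => exact sim_trans ih (ustep_sim hst.1)

lemma dropLast_head?' {α : Type*} {l : List α} (h : 2 ≤ l.length) :
    l.dropLast.head? = l.head? := by
  cases l with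
  | nil => simp at h
  | cons x m =>
    cases m with
    | nil => simp at h
    | cons y r => simp

/-- forward orientation of side-zone paths in a partner directing `(u,v)`;
gives existence of zone-internal in-edges -/
lemma side_fwd (hPr : N.Proper) {H : SDG V} (hH : RootedPartner H N)
    {u v : V} (huv : s(u,v) ∈ N.undir) (hdir : (u,v) ∈ H.dir) {b : V}
    (hb : sideReach N u v b) (hbv : b ≠ v) :
    H.dreach v b ∧ ∃ z, sideReach N u v z ∧ (z, b) ∈ H.dir := by
  obtain ⟨l, hl1, hl2, hl3⟩ := chain'_of_rtg hb
  have hlne : l ≠ [] := by cases l with | nil => simp at hl1 | cons c rest => simp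
  obtain ⟨l', hc', hh', hlast', hnd, _⟩ := nodup_chain' l hl3 hlne
  rw [hl1] at hh'
  rw [hl2] at hlast'
  cases l' with
  | nil => simp at hh'
  | cons c rest =>
    simp only [List.head?_cons, Option.some.injEq] at hh'
    have hh'' : v = c := hh'.symm
    subst hh''
    cases rest with
    | nil =>
      simp only [List.getLast?_singleton, Option.some.injEq] at hlast'
      exact absurd hlast'.symm hbv
    | cons d rest' =>
      have hnuv : (u,v) ∉ N.dir := undir_not_dir hPr huv
      have hsst : (v :: d :: rest').Chain' N.sstep :=
        List.IsChain.imp (fun _ _ h => Or.inr h.1) hc'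
      have hstate : ∃ p, (p, v) ∈ H.dir ∧ (p, v) ∉ N.dir ∧
          ∀ e, (d :: rest').head? = some e → p ≠ e := by
        refine ⟨u, hdir, hnuv, ?_⟩
        intro e he hue
        simp only [List.head?_cons, Option.some.injEq] at he
        subst he
        have hstep := (List.isChain_cons_cons.1 hc').1
        rw [← hue] at hstep
        exact hstep.2 (by rw [Sym2.eq_swap])
      have hfwd := partner_fwd_chain hPr hH (d :: rest') v hsst hnd (Or.inr hstate)
      have hlen : 2 ≤ (v :: d :: rest').length := by simp
      obtain ⟨z, hz1, hz2⟩ := chain'_last_step hfwd hlast' hlen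
      refine ⟨rtg_of_chain' _ hfwd v b rfl hlast', z, ?_, hz2⟩
      apply rtg_of_chain' (v :: d :: rest').dropLast
        (hc'.prefix (List.dropLast_prefix _)) v z _ hz1
      rw [dropLast_head?' hlen]
      rfl

/-- the `v`-side of a component edge cannot reach `u` -/
lemma side_not_reach_other (hPr : N.Proper) {H : SDG V} (hH : RootedPartner H N)
    {u v : V} (huv : s(u,v) ∈ N.undir) (hdir : (u,v) ∈ H.dir) :
    ¬ sideReach N u v u := by
  intro hr
  have hvu : u ≠ v := undir_ne hPr huv
  obtain ⟨hdz, -⟩ := side_fwd hPr hH huv hdir hr hvu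
  exact partner_noCycle hH ⟨(u,v), hdir, hdz⟩

lemma side_hP (hPr : N.Proper) (ht : InRootComp N t) {H : SDG V} (hH : RootedPartner H N)
    {u v : V} (huv : s(u,v) ∈ N.undir) (htv : sim N t v) (hdir : (u,v) ∈ H.dir) :
    ∀ b, sideReach N u v b → b ≠ v →
      ∃ w, sideReach N u v w ∧ ∀ w', ((w',b) ∈ H.dir ↔ w' = w) := by
  intro b hb hbv
  obtain ⟨-, z, hz1, hz2⟩ := side_fwd hPr hH huv hdir hb hbv
  have hbT : sim N t b := side_sub_comp htv hb
  have hc := comp_in_edge hPr hH ht hbT hz2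
  refine ⟨z, hz1, fun w' => ⟨fun hw' => in_unique_of_ideg_one hc.2.2.2 hz2 w' hw', ?_⟩⟩
  rintro rfl
  exact hz2

lemma side_exits_eq (hPr : N.Proper) (ht : InRootComp N t) {H : SDG V}
    (hH : RootedPartner H N) {u v : V} (huv : s(u,v) ∈ N.undir) (htv : sim N t v)
    (hdir : (u,v) ∈ H.dir) :
    exits H (sideReach N u v) = sideExits N u v := by
  ext e
  rw [mem_exits, mem_sideExits]
  constructor
  · rintro ⟨h1, h2, h3⟩
    by_cases hN : e ∈ N.dir
    · exact ⟨hN, h2⟩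
    · exfalso
      have hu : s(e.1,e.2) ∈ N.undir := partner_extra_undir hH h1 hN
      by_cases hsym : s(e.1, e.2) = s(u,v)
      · rcases Sym2.eq_iff.1 hsym with ⟨h4, h5⟩ | ⟨h4, h5⟩
        · rw [h4] at h2
          exact side_not_reach_other hPr hH huv hdir h2
        · have he' : (v, u) ∈ H.dir := by
            have heq : e = (v,u) := Prod.ext h4 h5
            rw [← heq]
            simpa using h1
          exact (partner_orient_iff hPr hH huv).1 hdir he'
      · exact h3 (h2.tail ⟨hu, hsym⟩)
  · rintro ⟨h1, h2⟩
    refine ⟨partner_dir_subset hH h1, h2, ?_⟩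
    intro h3
    have hT2 : sim N t e.2 := side_sub_comp htv h3
    exact dir_target_not_root hPr hH h1 (InRootComp_of_sim ht hT2)

lemma side_hzero (hPr : N.Proper) (ht : InRootComp N t) {H : SDG V}
    (hH : RootedPartner H N) {u v : V} (huv : s(u,v) ∈ N.undir) (htv : sim N t v)
    (hdir : (u,v) ∈ H.dir) :
    ∀ e ∈ exits H (sideReach N u v), ∀ w, sideReach N u v w → ¬ H.dreach e.2 w := by
  intro e he w hw hd
  have heN : e ∈ N.dir := by
    rw [side_exits_eq hPr ht hH huv htv hdir] at he
    exact (mem_sideExits.1 he).1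
  have hwT : sim N t w := side_sub_comp htv hw
  have hT2 : sim N t e.2 := dreach_into_comp hPr hH ht hwT hd
  exact dir_target_not_root hPr hH heN (InRootComp_of_sim ht hT2)

lemma side_formula (hPr : N.Proper) (ht : InRootComp N t) {H : SDG V}
    (hH : RootedPartner H N) {u v : V} (huv : s(u,v) ∈ N.undir) (htv : sim N t v)
    (hdir : (u,v) ∈ H.dir) {x : V} (hx : ¬ sim N t x) :
    pathCount H v x = ∑ e ∈ sideExits N u v, pathCount H e.2 x := by
  rw [← side_exits_eq hPr ht hH huv htv hdir]
  exact master_sum (partner_noCycle hH) (sideReach N u v) v Relation.ReflTransGen.refl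
    (side_hP hPr ht hH huv htv hdir) (side_hzero hPr ht hH huv htv hdir) x
    (fun h => hx (side_sub_comp htv h))

lemma sym_eq_mem {p q u v : V} (h : s(p,q) = s(u,v)) : p = u ∨ q = u := by
  rcases Sym2.eq_iff.1 h with ⟨h1, _⟩ | ⟨_, h2⟩
  · exact Or.inl h1
  · exact Or.inr h2

lemma comp_cover (hPr : N.Proper) (hG : RootedPartner G N) {u v b : V}
    (huv : s(u,v) ∈ N.undir) (hub : sim N u b) :
    sideReach N u v b ∨ sideReach N v u b := by
  have huvne : u ≠ v := undir_ne hPr huv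
  have hur : N.ureach u b := ureach_of_sim hPr hG hub.1 hub.2
  obtain ⟨l, hl1, hl2, hl3⟩ := chain'_of_rtg hur
  have hlne : l ≠ [] := by cases l with | nil => simp at hl1 | cons c rest => simp
  obtain ⟨l', hc', hh', hlast', hnd, _⟩ := nodup_chain' l hl3 hlne
  rw [hl1] at hh'
  rw [hl2] at hlast'
  cases l' with
  | nil => simp at hh'
  | cons c rest =>
    simp only [List.head?_cons, Option.some.injEq] at hh'
    have hh'' : u = c := hh'.symm
    subst hh''
    have hurest : u ∉ rest := (List.nodup_cons.1 hnd).1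
    cases rest with
    | nil =>
      simp only [List.getLast?_singleton, Option.some.injEq] at hlast'
      right
      rw [← hlast']
      exact Relation.ReflTransGen.refl
    | cons d rest' =>
      have hstep : N.ustep u d := (List.isChain_cons_cons.1 hc').1
      have hrestch : (d :: rest').Chain' N.ustep := (List.isChain_cons_cons.1 hc').2
      have hrest_nou : ∀ p q : V, p ∈ d :: rest' → q ∈ d :: rest' → N.ustep p q →
          N.ustep p q ∧ s(p,q) ≠ s(u,v) := by
        intro p q hp hq hpq
        refine ⟨hpq, ?_⟩
        intro hsym
        rcases sym_eq_mem hsym with h | h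
        · exact hurest (h ▸ hp)
        · exact hurest (h ▸ hq)
      have hlast'' : (d :: rest').getLast? = some b := by
        rw [← hlast', List.getLast?_cons_cons]
      by_cases hsym : s(u, d) = s(u,v)
      · -- first step goes to v; the rest lies in the v-side
        have hd : d = v := by
          rcases Sym2.eq_iff.1 hsym with ⟨_, h⟩ | ⟨h1, h2⟩
          · exact h
          · exact absurd h1 huvne
        have hd' : v = d := hd.symm
        subst hd'
        left
        have hchain' : (v :: rest').Chain'
            (fun p q => N.ustep p q ∧ s(p,q) ≠ s(u,v)) :=
          chain'_imp_mem _ hrestch hrest_nou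
        exact rtg_of_chain' _ hchain' v b rfl hlast''
      · right
        have hchain' : (u :: d :: rest').Chain'
            (fun p q => N.ustep p q ∧ s(p,q) ≠ s(v,u)) := by
          rw [List.Chain', List.isChain_cons_cons]
          constructor
          · exact ⟨hstep, fun h => hsym (h.trans Sym2.eq_swap)⟩
          · apply chain'_imp_mem _ hrestch
            intro p q hp hq hpq
            obtain ⟨h1, h2⟩ := hrest_nou p q hp hq hpq
            exact ⟨h1, fun h => h2 (h.trans Sym2.eq_swap)⟩
        exact rtg_of_chain' _ hchain' u b rfl hlast'

lemma side_disjoint (hPr : N.Proper) {H : SDG V} (hH : RootedPartner H N)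
    {u v : V} (huv : s(u,v) ∈ N.undir) (hdir : (u,v) ∈ H.dir) {b : V}
    (h1 : sideReach N u v b) (h2 : sideReach N v u b) : False := by
  have hsymm : Symmetric (fun p q => N.ustep p q ∧ s(p,q) ≠ s(v,u)) := by
    rintro p q ⟨ha, hb'⟩
    exact ⟨ustep_symm ha, fun hc => hb' (Sym2.eq_swap.trans hc)⟩
  haveI : Std.Symm (fun p q : V => N.ustep p q ∧ s(p,q) ≠ s(v,u)) := ⟨fun a b h => hsymm h⟩
  have h2' := Std.Symm.symm (r := Relation.ReflTransGen (fun p q : V => N.ustep p q ∧ s(p,q) ≠ s(v,u))) _ _ h2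
  have h2'' : Relation.ReflTransGen (fun p q => N.ustep p q ∧ s(p,q) ≠ s(u,v)) b u :=
    Relation.ReflTransGen.mono
      (fun p q h => ⟨h.1, fun hc => h.2 (hc.trans Sym2.eq_swap)⟩) _ _ h2'
  exact side_not_reach_other hPr hH huv hdir (h1.trans h2'')

end Assembly

theorem statement_10 {V : Type} [DecidableEq V] (N : SDG V) (hP : N.Proper)
    (hL : LNetwork N) (t : V) (ht : InRootComp N t) :
    -- μ(ρ(T), N⁺_ρ) does not depend on the root choice function ρ
    (∀ (ρ₁ ρ₂ : V → V) (G₁ G₂ : SDG V), RootChoice N ρ₁ → PartnerFor N ρ₁ G₁ →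
       RootChoice N ρ₂ → PartnerFor N ρ₂ G₂ →
       ∀ x, IsUnrootedLeaf N x → pathCount G₁ (ρ₁ t) x = pathCount G₂ (ρ₂ t) x) ∧
    -- and for any edge uv of T, this common vector is μ_d(u, v) + μ_d(v, u)
    ∀ u v : V, s(u, v) ∈ N.undir → sim N t u →
      ∀ (ρ : V → V) (G : SDG V), RootChoice N ρ → PartnerFor N ρ G →
        ∀ x, IsUnrootedLeaf N x →
          pathCount G (ρ t) x = muD N u v x + muD N v u x := by
  classical
  constructor
  · intro ρ₁ ρ₂ G₁ G₂ hρ₁ hG₁p hρ₂ hG₂p x hxleaf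
    by_cases hxT : sim N t x
    · rw [zone_pathCount_one hP ht hρ₁ hG₁p hxT, zone_pathCount_one hP ht hρ₂ hG₂p hxT]
    · rw [partner_formula hP ht hρ₁ hG₁p hxT, partner_formula hP ht hρ₂ hG₂p hxT]
      apply Finset.sum_congr rfl
      intro e he
      exact pathCount_invariant hP hG₁p.1 hG₂p.1
        (dir_target_not_root hP hG₁p.1 (mem_compExits.1 he).1) x
  · intro u v huv htu ρ G hρ hGp x hxleaf
    have hG := hGp.1
    have htv : sim N t v := sim_trans htu (ustep_sim huv)
    have hvu : s(v,u) ∈ N.undir := by rw [Sym2.eq_swap]; exact huv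
    have hH₁ex : ∃ H : SDG V, RootedPartner H N ∧ (u,v) ∈ H.dir :=
      ⟨reroot N G t u, reroot_partner hP hG ht htu, reroot_edge_out hP hG ht htu huv⟩
    have hH₂ex : ∃ H : SDG V, RootedPartner H N ∧ (v,u) ∈ H.dir :=
      ⟨reroot N G t v, reroot_partner hP hG ht htv, reroot_edge_out hP hG ht htv hvu⟩
    by_cases hxT : sim N t x
    · exfalso
      have hleaf : IsRootedLeaf N x := hL.2 x hxleaf
      have hedge : ∃ c, s(x,c) ∈ N.undir := by
        by_cases hxu : x = u
        · exact ⟨v, hxu ▸ huv⟩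
        · have hxsim : sim N x u := sim_trans (sim_symm hxT) htu
          have hur : N.ureach x u := ureach_of_sim hP hG hxsim.1 hxsim.2
          rcases Relation.ReflTransGen.cases_head hur with h | ⟨c, hc1, _⟩
          · exact absurd h hxu
          · exact ⟨c, hc1⟩
      obtain ⟨c, hc⟩ := hedge
      have hGx := reroot_partner hP hG ht hxT
      have hout : (x, c) ∈ (reroot N G t x).dir := reroot_edge_out hP hG ht hxT hc
      have h0 := hleaf _ hGx
      unfold odeg at h0
      rw [Finset.card_eq_zero] at h0
      have hmem : (x,c) ∈ (reroot N G t x).dir.filter (fun e => e.1 = x) :=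
        Finset.mem_filter.2 ⟨hout, rfl⟩
      rw [h0] at hmem
      exact absurd hmem (Finset.notMem_empty _)
    · set H₁ := hH₁ex.choose with hH₁def
      have hH₁ : RootedPartner H₁ N := hH₁ex.choose_spec.1
      have hH₁d : (u,v) ∈ H₁.dir := hH₁ex.choose_spec.2
      set H₂ := hH₂ex.choose with hH₂def
      have hH₂ : RootedPartner H₂ N := hH₂ex.choose_spec.1
      have hH₂d : (v,u) ∈ H₂.dir := hH₂ex.choose_spec.2
      have hmuD1 : muD N u v x = pathCount H₁ v x := by
        unfold muD
        rw [dif_pos hH₁ex]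
      have hmuD2 : muD N v u x = pathCount H₂ u x := by
        unfold muD
        rw [dif_pos hH₂ex]
      have hsplit : compExits N t = sideExits N u v ∪ sideExits N v u := by
        ext e
        rw [mem_compExits, Finset.mem_union, mem_sideExits, mem_sideExits]
        constructor
        · rintro ⟨h1, h2⟩
          have hub : sim N u e.1 := sim_trans (sim_symm htu) h2
          rcases comp_cover hP hG huv hub with h | h
          · exact Or.inl ⟨h1, h⟩
          · exact Or.inr ⟨h1, h⟩
        · rintro (⟨h1, h2⟩ | ⟨h1, h2⟩)
          · exact ⟨h1, side_sub_comp htv h2⟩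
          · exact ⟨h1, side_sub_comp htu h2⟩
      have hdisj : Disjoint (sideExits N u v) (sideExits N v u) := by
        rw [Finset.disjoint_left]
        intro e he1 he2
        exact side_disjoint hP hH₁ huv hH₁d (mem_sideExits.1 he1).2 (mem_sideExits.1 he2).2
      rw [partner_formula hP ht hρ hGp hxT, hsplit, Finset.sum_union hdisj]
      congr 1
      · rw [hmuD1, side_formula hP ht hH₁ huv htv hH₁d hxT]
        apply Finset.sum_congr rfl
        intro e he
        exact pathCount_invariant hP hG hH₁
          (dir_target_not_root hP hG (mem_sideExits.1 he).1) x
      · rw [hmuD2, side_formula hP ht hH₂ hvu htu hH₂d hxT]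
        apply Finset.sum_congr rfl
        intro e he
        exact pathCount_invariant hP hG hH₂
          (dir_target_not_root hP hG (mem_sideExits.1 he).1) x

end SDG
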